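/- arXiv:1509.07346 — 8 statements merged into one kernel-verified Lean document; each statement's English description precedes it below -/
import Mathlib

section
/- If G = (A, B, E) is a bipartite graph such that there exist positive reals a, b and a weight function w: E → ℝ⁺ with the sum of weights of edges at each vertex of A equal to a and at each vertex of B equal to b, then G is a normalized matching graph: for every subset X ⊆ A, |X|/|A| ≤ |Γ(X)|/|B|, where Γ(X) is the set of neighbors of X in B. -/
/-! Double count the total weight `∑ w` of the edges leaving a set `X ⊆ A`: it is `a |X|`, and since
these edges all end in `Γ(X)`, where each vertex carries total weight `b`, it is at most `b |Γ(X)|`.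
Counting all edges the same way gives `a |A| = b |B|`, and dividing the two relations gives
`|X| / |A| ≤ |Γ(X)| / |B|`. -/

open Finset

theorem div_le_div_of_mul_le_mul_of_mul_eq_mul {K : Type*} [Field K] [LinearOrder K]
    [IsStrictOrderedRing K] {x y m n a b : K} (ha : 0 < a) (hb : 0 < b) (hn : 0 ≤ n)
    (hxy : a * x ≤ b * y) (hmn : a * m = b * n) : x / m ≤ y / n :=
  calc x / m = a * x / (b * n) := by rw [← hmn, mul_div_mul_left _ _ ha.ne']
    _ ≤ b * y / (b * n) := div_le_div_of_nonneg_right hxy (by positivity)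
    _ = y / n := mul_div_mul_left _ _ hb.ne'

section WeightedBipartite

variable {α β : Type*} [Fintype α] [Fintype β] {E : α → β → Prop} [∀ i j, Decidable (E i j)]
  {w : α → β → ℝ} {a b : ℝ}

theorem mul_card_eq_mul_card_of_sum_weights_eq
    (hA : ∀ i, ∑ j ∈ univ.filter (E i), w i j = a)
    (hB : ∀ j, ∑ i ∈ univ.filter (E · j), w i j = b) :
    a * Fintype.card α = b * Fintype.card β := by
  have hcount := sum_sum_bipartiteAbove_eq_sum_sum_bipartiteBelow (s := univ) (t := univ) E w
  simp only [bipartiteAbove, bipartiteBelow, hA, hB, sum_const, card_univ, nsmul_eq_mul] at hcount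
  linarith

theorem mul_card_le_mul_card_neighbors (hw : ∀ i j, E i j → 0 ≤ w i j)
    (X : Finset α) (hA : ∀ i ∈ X, a ≤ ∑ j ∈ univ.filter (E i), w i j)
    (hB : ∀ j, ∑ i ∈ univ.filter (E · j), w i j ≤ b) :
    a * #X ≤ b * #(univ.filter fun j => ∃ i ∈ X, E i j) := by
  set Γ := univ.filter fun j => ∃ i ∈ X, E i j
  have hneighbors : ∀ i ∈ X, Γ.bipartiteAbove E i = univ.filter (E i) := by
    intro i hi
    ext j
    simpa [bipartiteAbove, Γ] using fun hij => ⟨i, hi, hij⟩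
  have hbelow : ∀ j, ∑ i ∈ X.bipartiteBelow E j, w i j ≤ b := fun j =>
    (sum_le_sum_of_subset_of_nonneg (filter_subset_filter _ (subset_univ X))
      fun i hi _ => hw i j (mem_filter.1 hi).2).trans (hB j)
  calc a * #X = ∑ _i ∈ X, a := by rw [sum_const, nsmul_eq_mul, mul_comm]
    _ ≤ ∑ i ∈ X, ∑ j ∈ Γ.bipartiteAbove E i, w i j :=
      sum_le_sum fun i hi => (hneighbors i hi).symm ▸ hA i hi
    _ = ∑ j ∈ Γ, ∑ i ∈ X.bipartiteBelow E j, w i j :=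
      sum_sum_bipartiteAbove_eq_sum_sum_bipartiteBelow E w
    _ ≤ ∑ _j ∈ Γ, b := sum_le_sum fun j _ => hbelow j
    _ = b * #Γ := by rw [sum_const, nsmul_eq_mul, mul_comm]

end WeightedBipartite

theorem stmt_0_general {α β : Type*} [Fintype α] [Fintype β]
    (E : α → β → Prop) [∀ i j, Decidable (E i j)]
    (w : α → β → ℝ) (a b : ℝ) (ha : 0 < a) (hb : 0 < b)
    (hw : ∀ i j, E i j → 0 < w i j)
    (hA : ∀ i : α, ∑ j ∈ Finset.univ.filter (fun j => E i j), w i j = a)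
    (hB : ∀ j : β, ∑ i ∈ Finset.univ.filter (fun i => E i j), w i j = b) :
    ∀ X : Finset α,
      (X.card : ℝ) / (Fintype.card α : ℝ) ≤
      ((Finset.univ.filter (fun j => ∃ i ∈ X, E i j)).card : ℝ) / (Fintype.card β : ℝ) := by
  intro X
  have hX := mul_card_le_mul_card_neighbors (fun i j hij => (hw i j hij).le) X
    (fun i _ => (hA i).ge) (fun j => (hB j).le)
  exact div_le_div_of_mul_le_mul_of_mul_eq_mul ha hb (Nat.cast_nonneg _) hX
    (mul_card_eq_mul_card_of_sum_weights_eq hA hB)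

/-- If a bipartite graph `E` between finite nonempty parts `α` and `β`
admits a positive edge-weight function whose sum at every vertex of `α` is `a > 0`
and at every vertex of `β` is `b > 0`, then it is a normalized matching graph. -/
theorem stmt_0 {α β : Type*} [Fintype α] [Fintype β] [Nonempty α] [Nonempty β]
    (E : α → β → Prop) [∀ i j, Decidable (E i j)]
    (w : α → β → ℝ) (a b : ℝ) (ha : 0 < a) (hb : 0 < b)
    (hw : ∀ i j, E i j → 0 < w i j)
    (hA : ∀ i : α, ∑ j ∈ Finset.univ.filter (fun j => E i j), w i j = a)
    (hB : ∀ j : β, ∑ i ∈ Finset.univ.filter (fun i => E i j), w i j = b) :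
    ∀ X : Finset α,
      (X.card : ℝ) / (Fintype.card α : ℝ) ≤
      ((Finset.univ.filter (fun j => ∃ i ∈ X, E i j)).card : ℝ) / (Fintype.card β : ℝ) :=
  stmt_0_general E w a b ha hb hw hA hB
end

section
/- If G and G' are two bipartite graphs on the same vertex parts A and B (with |A| ≤ |B|), both having the normalized matching property, then there exists a subset V ⊆ B with |V| = |A| such that G has a complete matching from A onto V and G' also has a complete matching from A onto V. -/
/-!
Glue the two graphs into one bipartite graph from `A ⊕ B` to `B ⊕ A`: a vertex `a` of `A` is
joined to its `G`-neighbours in the copy of `B`, and a vertex `b` of `B` is joined to its own copy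
and to its `G'`-neighbours in `A`. The normalized matching property of `G`, together with the dual
one of `G'`, gives Hall's condition there, so this graph has a perfect matching `F`. It matches `A`
into some `V ⊆ B` along `G`; the vertices of `B \ V` are then matched to themselves, so the copy of
`A` is matched along `G'` exactly with `V`.
-/

open Finset Function

section

variable {α β : Type*} [Fintype α] [Fintype β]

def nbhd (E : α → β → Prop) [∀ i j, Decidable (E i j)] (X : Finset α) : Finset β :=
  {j | ∃ i ∈ X, E i j}

omit [Fintype α] in
theorem mem_nbhd {E : α → β → Prop} [∀ i j, Decidable (E i j)] {X : Finset α} {j : β} :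
    j ∈ nbhd E X ↔ ∃ i ∈ X, E i j := by
  simp [nbhd]

def NormalizedMatching (E : α → β → Prop) [∀ i j, Decidable (E i j)] : Prop :=
  ∀ X : Finset α, #X * Fintype.card β ≤ #(nbhd E X) * Fintype.card α

theorem NormalizedMatching.flip {E : α → β → Prop} [∀ i j, Decidable (E i j)]
    (h : NormalizedMatching E) : NormalizedMatching fun j i => E i j := by
  classical
  intro Y
  set N := nbhd (fun j i => E i j) Y
  have hsub : nbhd E Nᶜ ⊆ Yᶜ := by
    intro j hj
    obtain ⟨i, hi, hij⟩ := mem_nbhd.1 hj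
    exact mem_compl.2 fun hjY => mem_compl.1 hi (mem_nbhd.2 ⟨j, hjY, hij⟩)
  have key :
      (Fintype.card α - #N) * Fintype.card β ≤ (Fintype.card β - #Y) * Fintype.card α := by
    rw [← card_compl, ← card_compl]
    exact (h Nᶜ).trans (Nat.mul_le_mul_right _ (card_le_card hsub))
  have hN := card_le_univ N
  have hY := card_le_univ Y
  zify [hN, hY] at key ⊢
  linear_combination key

theorem Nat.add_le_max_add_of_mul_le {n m x y g w : ℕ} (hnm : n ≤ m) (hxn : x ≤ n)
    (hx : x * m ≤ g * n) (hy : y * n ≤ w * m) : x + y ≤ max g y + w := by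
  rcases le_or_gt (x * m) (y * n) with hxy | hxy
  · rcases Nat.eq_zero_or_pos m with rfl | hm
    · omega
    have := Nat.le_of_mul_le_mul_right (hxy.trans hy) hm
    omega
  · have hn : 0 < n := Nat.pos_of_ne_zero fun hn => by simp_all
    have hmn : 0 < m * n := Nat.mul_pos (hn.trans_le hnm) hn
    refine le_trans (Nat.le_of_mul_le_mul_right (c := m * n) ?_ hmn)
      (Nat.add_le_add_right (le_max_left g y) w)
    -- `(x + y) * m * n ≤ x * m ^ 2 + y * n ^ 2` because `(m - n) * (x * m - y * n) ≥ 0`.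
    nlinarith

variable (E E' : α → β → Prop)

def SumLink : α ⊕ β → β ⊕ α → Prop
  | .inl a, .inl b => E a b
  | .inl _, .inr _ => False
  | .inr b, .inl b' => b' = b
  | .inr b, .inr a => E' a b

instance [DecidableEq β] [∀ i j, Decidable (E i j)] [∀ i j, Decidable (E' i j)] :
    DecidableRel (SumLink E E')
  | .inl a, .inl b => inferInstanceAs (Decidable (E a b))
  | .inl _, .inr _ => inferInstanceAs (Decidable False)
  | .inr b, .inl b' => inferInstanceAs (Decidable (b' = b))
  | .inr b, .inr a => inferInstanceAs (Decidable (E' a b))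

variable {E E'}

theorem card_le_card_nbhd_sumLink [DecidableEq β] [∀ i j, Decidable (E i j)]
    [∀ i j, Decidable (E' i j)] (hcard : Fintype.card α ≤ Fintype.card β)
    (hE : NormalizedMatching E) (hE' : NormalizedMatching fun j i => E' i j)
    (s : Finset (α ⊕ β)) : #s ≤ #(nbhd (SumLink E E') s) := by
  set S := nbhd (SumLink E E') s
  set X := s.toLeft
  set Y := s.toRight
  set Y' := nbhd (fun j i => E' i j) Y
  have hleft : nbhd E X ∪ Y ⊆ S.toLeft := by
    intro j hj
    rcases mem_union.1 hj with hj | hj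
    · obtain ⟨i, hi, hij⟩ := mem_nbhd.1 hj
      exact mem_toLeft.2 (mem_nbhd.2 ⟨.inl i, mem_toLeft.1 hi, hij⟩)
    · exact mem_toLeft.2 (mem_nbhd.2 ⟨.inr j, mem_toRight.1 hj, rfl⟩)
  have hright : Y' ⊆ S.toRight := by
    intro i hi
    obtain ⟨j, hj, hij⟩ := mem_nbhd.1 hi
    exact mem_toRight.2 (mem_nbhd.2 ⟨.inr j, mem_toRight.1 hj, hij⟩)
  calc #s = #X + #Y := card_toLeft_add_card_toRight.symm
    _ ≤ max #(nbhd E X) #Y + #Y' :=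
      Nat.add_le_max_add_of_mul_le hcard (card_le_univ X) (hE X) (hE' Y)
    _ ≤ #(nbhd E X ∪ Y) + #Y' :=
      Nat.add_le_add_right
        (max_le (card_le_card subset_union_left) (card_le_card subset_union_right)) _
    _ ≤ #S.toLeft + #S.toRight := add_le_add (card_le_card hleft) (card_le_card hright)
    _ = #S := card_toLeft_add_card_toRight

theorem exists_common_matching_of_sumLink [DecidableEq β] (F : α ⊕ β → β ⊕ α)
    (hF : Injective F) (hFE : ∀ x, SumLink E E' x (F x)) :
    ∃ V : Finset β, #V = Fintype.card α ∧
      (∃ f : α → β, Injective f ∧ (∀ i, E i (f i)) ∧ univ.image f = V) ∧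
      (∃ f : α → β, Injective f ∧ (∀ i, E' i (f i)) ∧ univ.image f = V) := by
  have hsurj : Surjective F :=
    ((Fintype.bijective_iff_injective_and_card F).2 ⟨hF, by simp [add_comm]⟩).2
  have hleft : ∀ a, ∃ b, F (.inl a) = .inl b ∧ E a b := by
    intro a
    have := hFE (.inl a)
    rcases h : F (.inl a) with b | a' <;> simp only [h, SumLink] at this
    exact ⟨b, rfl, this⟩
  choose f hf hfE using hleft
  have hright : ∀ a, ∃ b, F (.inr b) = .inr a ∧ E' a b := by
    intro a
    obtain ⟨x | b, hx⟩ := hsurj (.inr a)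
    · simp [hf] at hx
    · exact ⟨b, hx, by simpa [hx, SumLink] using hFE (.inr b)⟩
  choose g hg hgE using hright
  have hf_inj : Injective f := fun a a' h => Sum.inl_injective (hF (by rw [hf, hf, h]))
  have hg_inj : Injective g := fun a a' h => Sum.inr_injective (by rw [← hg, ← hg, h])
  -- `inl (g a)` is hit by `F`, but not from `inr (g a)`, which goes to `inr a`.
  have himg : univ.image g ⊆ univ.image f := by
    rintro _ hb
    obtain ⟨a, -, rfl⟩ := mem_image.1 hb
    obtain ⟨x | b, hx⟩ := hsurj (.inl (g a))
    · exact mem_image.2 ⟨x, mem_univ x, Sum.inl_injective ((hf x).symm.trans hx)⟩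
    · have hb : g a = b := by simpa [hx, SumLink] using hFE (.inr b)
      simp [← hb, hg] at hx
  refine ⟨univ.image f, by simp [card_image_of_injective _ hf_inj], ⟨f, hf_inj, hfE, rfl⟩,
    ⟨g, hg_inj, hgE, eq_of_subset_of_card_le himg ?_⟩⟩
  rw [card_image_of_injective _ hf_inj, card_image_of_injective _ hg_inj]

end

/-- If two bipartite graphs on the same parts `α`, `β` (with `|α| ≤ |β|`)
both have the normalized matching property, then some common `|α|`-element subset `V`
of `β` is the image of a complete matching in each of them. -/
theorem stmt_2 {α β : Type*} [Fintype α] [Fintype β] [DecidableEq β]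
    (E E' : α → β → Prop) [∀ i j, Decidable (E i j)] [∀ i j, Decidable (E' i j)]
    (hcard : Fintype.card α ≤ Fintype.card β)
    (hnm : ∀ X : Finset α,
      X.card * Fintype.card β ≤
        (Finset.univ.filter (fun j => ∃ i ∈ X, E i j)).card * Fintype.card α)
    (hnm' : ∀ X : Finset α,
      X.card * Fintype.card β ≤
        (Finset.univ.filter (fun j => ∃ i ∈ X, E' i j)).card * Fintype.card α) :
    ∃ V : Finset β, V.card = Fintype.card α ∧
      (∃ f : α → β, Function.Injective f ∧ (∀ i, E i (f i)) ∧ Finset.univ.image f = V) ∧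
      (∃ f : α → β, Function.Injective f ∧ (∀ i, E' i (f i)) ∧ Finset.univ.image f = V) := by
  obtain ⟨F, hF, hFE⟩ := (Fintype.all_card_le_filter_rel_iff_exists_injective (SumLink E E')).1
    (card_le_card_nbhd_sumLink hcard hnm (NormalizedMatching.flip (E := E') hnm'))
  exact exists_common_matching_of_sumLink F hF hFE
end

section
/- The Boolean lattice 2^[n] has at least 2^(C(n-1, ⌊(n-2)/2⌋)) symmetric chain decompositions. In particular, 2^[n] has at least 2^(Ω(2^n/√n)) symmetric chain decompositions. -/
/-- A symmetric chain in `2^[n]`: a chain `c₀ ⊂ ... ⊂ c_k` with `|c_i| = (n-k)/2 + i`,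
i.e. a chain whose set of cardinalities is an interval `[m, n-m]`. -/
def IsSymmetricChain (n : ℕ) (C : Finset (Finset (Fin n))) : Prop :=
  (∀ x ∈ C, ∀ y ∈ C, x ⊆ y ∨ y ⊆ x) ∧
  ∃ m : ℕ, 2 * m ≤ n ∧ C.image Finset.card = Finset.Icc m (n - m)

/-- A symmetric chain decomposition of `2^[n]`. -/
def IsSymmetricChainDecomposition (n : ℕ) (P : Finset (Finset (Finset (Fin n)))) : Prop :=
  (∀ C ∈ P, IsSymmetricChain n C) ∧ ∀ x : Finset (Fin n), ∃! C, C ∈ P ∧ x ∈ C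

/-!
Given a symmetric chain decomposition of `2^[n-1]`, every chain `C` gives the grid `C × 2` in
`2^[n] = 2^[n-1] × 2`, which splits into two symmetric chains in two different ways as soon as
`|C| ≥ 2`: peel off the hook through its top corner, or the one through its bottom corner. The
choices for different chains are independent and produce different decompositions. The chains
with `|C| ≥ 2` are exactly those meeting level `⌊(n-2)/2⌋` of `2^[n-1]`, each in exactly one
set, so there are `C(n-1, ⌊(n-2)/2⌋)` of them. The asymptotic form follows from
`C(2k, k) ≥ 4^k / (2√k)`.
-/

open Finset

section

variable {α : Type*}

lemma IsChain.sup_mem [SemilatticeSup α] [OrderBot α] {C : Finset α}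
    (hC : IsChain (· ≤ ·) (C : Set α)) (hne : C.Nonempty) : C.sup id ∈ C := by
  rw [← sup'_eq_sup hne]
  refine sup'_mem (C : Set α) (fun x hx y hy => ?_) C hne id fun _ h => h
  rcases hC.total hx hy with hxy | hyx
  · rwa [sup_of_le_right hxy]
  · rwa [sup_of_le_left hyx]

lemma IsChain.inf_mem [SemilatticeInf α] [OrderTop α] {C : Finset α}
    (hC : IsChain (· ≤ ·) (C : Set α)) (hne : C.Nonempty) : C.inf id ∈ C :=
  IsChain.sup_mem (α := αᵒᵈ) hC.symm hne

lemma IsChain.injOn_card {C : Set (Finset α)} (hC : IsChain (· ⊆ ·) C) : C.InjOn card :=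
  fun _ hx _ hy hxy => (hC.total hx hy).elim
    (fun h => eq_of_subset_of_card_le h hxy.ge) (fun h => (eq_of_subset_of_card_le h hxy.le).symm)

lemma image_erase_of_injOn {β : Type*} [DecidableEq α] [DecidableEq β] {f : α → β}
    {s : Finset α} (hf : Set.InjOn f s) {a : α} (ha : a ∈ s) :
    (s.erase a).image f = (s.image f).erase (f a) := by
  ext b
  simp only [mem_image, mem_erase]
  constructor
  · rintro ⟨x, ⟨hxa, hx⟩, rfl⟩
    exact ⟨fun he => hxa (hf hx ha he), x, hx, rfl⟩
  · rintro ⟨hb, x, hx, rfl⟩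
    exact ⟨x, ⟨fun he => hb (he ▸ rfl), hx⟩, rfl⟩

lemma existsUnique_mem_biUnion {β : Type*} [DecidableEq β] {P : Finset (Finset α)}
    (hP : ∀ a, ∃! C, C ∈ P ∧ a ∈ C) (π : β → α)
    {Q : Finset α → Finset (Finset β)}
    (hQπ : ∀ C ∈ P, ∀ D ∈ Q C, ∀ x ∈ D, π x ∈ C)
    (hQ : ∀ C ∈ P, ∀ x, π x ∈ C → ∃! D, D ∈ Q C ∧ x ∈ D) (x : β) :
    ∃! D, D ∈ P.biUnion Q ∧ x ∈ D := by
  obtain ⟨C, ⟨hC, hxC⟩, hCuniq⟩ := hP (π x)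
  obtain ⟨D, ⟨hD, hxD⟩, hDuniq⟩ := hQ C hC x hxC
  refine ⟨D, ⟨mem_biUnion.2 ⟨C, hC, hD⟩, hxD⟩, ?_⟩
  rintro D' ⟨hD', hxD'⟩
  obtain ⟨C', hC', hD'C'⟩ := mem_biUnion.1 hD'
  obtain rfl := hCuniq C' ⟨hC', hQπ C' hC' D' hD'C' x hxD'⟩
  exact hDuniq D' ⟨hD'C', hxD'⟩

end

lemma sixteen_pow_le_mul_centralBinom_sq {k : ℕ} (hk : 1 ≤ k) :
    16 ^ k ≤ 4 * k * k.centralBinom ^ 2 := by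
  induction k, hk using Nat.le_induction with
  | base => decide
  | succ k hk ih =>
    have hrec := Nat.succ_mul_centralBinom_succ k
    refine Nat.le_of_mul_le_mul_right (c := k + 1) ?_ (by omega)
    calc 16 ^ (k + 1) * (k + 1) = 16 * (k + 1) * 16 ^ k := by ring
      _ ≤ 16 * (k + 1) * (4 * k * k.centralBinom ^ 2) := by gcongr
      _ = 16 * (4 * k * (k + 1)) * k.centralBinom ^ 2 := by ring
      _ ≤ 16 * (2 * k + 1) ^ 2 * k.centralBinom ^ 2 := by gcongr; nlinarith
      _ = 4 * ((k + 1) * (k + 1).centralBinom) ^ 2 := by rw [hrec]; ring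
      _ = 4 * (k + 1) * (k + 1).centralBinom ^ 2 * (k + 1) := by ring

lemma four_pow_le_mul_choose_sq {n : ℕ} (hn : 4 ≤ n) :
    4 ^ n ≤ 256 * n * ((n - 1).choose ((n - 2) / 2)) ^ 2 := by
  set k := (n - 2) / 2
  have hcb : k.centralBinom ≤ (n - 1).choose k := by
    rw [Nat.centralBinom_eq_two_mul_choose]
    exact Nat.choose_le_choose k (by omega)
  calc 4 ^ n ≤ 4 ^ (2 * k + 3) := Nat.pow_le_pow_right (by norm_num) (by omega)
    _ = 64 * 16 ^ k := by rw [pow_add, pow_mul]; ring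
    _ ≤ 64 * (4 * k * k.centralBinom ^ 2) := by
      gcongr
      exact sixteen_pow_le_mul_centralBinom_sq (by omega)
    _ = 256 * k * k.centralBinom ^ 2 := by ring
    _ ≤ 256 * n * ((n - 1).choose k) ^ 2 := by gcongr; omega

lemma two_pow_div_sqrt_le_choose {n : ℕ} (hn : 4 ≤ n) :
    1 / 16 * 2 ^ n / Real.sqrt n ≤ ((n - 1).choose ((n - 2) / 2) : ℝ) := by
  set B := (n - 1).choose ((n - 2) / 2)
  have hsqrt : 0 < Real.sqrt n := Real.sqrt_pos.2 (by positivity)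
  have hB : ((4 ^ n : ℕ) : ℝ) ≤ ((256 * n * B ^ 2 : ℕ) : ℝ) :=
    Nat.cast_le.2 (four_pow_le_mul_choose_sq hn)
  rw [div_le_iff₀ hsqrt, ← pow_le_pow_iff_left₀ (by positivity) (by positivity) two_ne_zero,
    mul_pow, mul_pow, Real.sq_sqrt (by positivity), ← pow_mul, mul_comm n 2, pow_mul]
  push_cast at hB
  linarith

namespace SymmetricChain

variable {n : ℕ}

/- Under `2^[n+1] = 2^[n] × 2`, with `Fin.last n` as the new point, `lift₀ s` and `lift₁ s` are
`s × {0}` and `s × {1}`. -/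
def lift₀ (s : Finset (Fin n)) : Finset (Fin (n + 1)) := s.map Fin.castSuccEmb

def lift₁ (s : Finset (Fin n)) : Finset (Fin (n + 1)) := insert (Fin.last n) (lift₀ s)

def proj (x : Finset (Fin (n + 1))) : Finset (Fin n) := univ.filter fun i => i.castSucc ∈ x

lemma last_notMem_lift₀ (s : Finset (Fin n)) : Fin.last n ∉ lift₀ s := by
  simp [lift₀, Fin.castSucc_ne_last]

lemma last_mem_lift₁ (s : Finset (Fin n)) : Fin.last n ∈ lift₁ s := mem_insert_self _ _

@[simp] lemma lift₀_inj {s t : Finset (Fin n)} : lift₀ s = lift₀ t ↔ s = t := map_inj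

@[simp] lemma lift₁_inj {s t : Finset (Fin n)} : lift₁ s = lift₁ t ↔ s = t := by
  refine ⟨fun h => ?_, congrArg lift₁⟩
  have := congrArg (erase · (Fin.last n)) h
  simpa [lift₁, erase_insert, last_notMem_lift₀] using this

@[simp] lemma lift₀_ne_lift₁ (s t : Finset (Fin n)) : lift₀ s ≠ lift₁ t :=
  fun h => last_notMem_lift₀ s (h ▸ last_mem_lift₁ t)

@[simp] lemma lift₁_ne_lift₀ (s t : Finset (Fin n)) : lift₁ s ≠ lift₀ t :=
  (lift₀_ne_lift₁ t s).symm

@[simp] lemma card_lift₀ (s : Finset (Fin n)) : (lift₀ s).card = s.card := card_map _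

@[simp] lemma card_lift₁ (s : Finset (Fin n)) : (lift₁ s).card = s.card + 1 := by
  rw [lift₁, card_insert_of_notMem (last_notMem_lift₀ s), card_lift₀]

lemma lift₀_subset_lift₀ {s t : Finset (Fin n)} (h : s ⊆ t) : lift₀ s ⊆ lift₀ t :=
  map_subset_map.2 h

lemma lift₁_subset_lift₁ {s t : Finset (Fin n)} (h : s ⊆ t) : lift₁ s ⊆ lift₁ t :=
  insert_subset_insert _ (lift₀_subset_lift₀ h)

lemma lift₀_subset_lift₁ {s t : Finset (Fin n)} (h : s ⊆ t) : lift₀ s ⊆ lift₁ t :=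
  (lift₀_subset_lift₀ h).trans (subset_insert _ _)

@[simp] lemma proj_lift₀ (s : Finset (Fin n)) : proj (lift₀ s) = s := by
  ext i; simp [proj, lift₀]

@[simp] lemma proj_lift₁ (s : Finset (Fin n)) : proj (lift₁ s) = s := by
  ext i; simp [proj, lift₁, lift₀, Fin.castSucc_ne_last]

lemma exists_lift (x : Finset (Fin (n + 1))) : ∃ s, x = lift₀ s ∨ x = lift₁ s := by
  refine ⟨proj x, ?_⟩
  by_cases h : Fin.last n ∈ x
  · right
    ext j
    cases j using Fin.lastCases <;> simp [h, lift₁, lift₀, proj, Fin.castSucc_ne_last]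
  · left
    ext j
    cases j using Fin.lastCases <;> simp [h, lift₀, proj, Fin.castSucc_ne_last]

variable {m : ℕ} {C : Finset (Finset (Fin n))}

structure IsSymmetricChainFrom (n m : ℕ) (C : Finset (Finset (Fin n))) : Prop where
  isChain : IsChain (· ⊆ ·) (C : Set (Finset (Fin n)))
  two_mul_le : 2 * m ≤ n
  image_card : C.image card = Icc m (n - m)

lemma isSymmetricChain_iff : IsSymmetricChain n C ↔ ∃ m, IsSymmetricChainFrom n m C :=
  ⟨fun ⟨hC, m, hm, himg⟩ => ⟨m, fun _ hx _ hy _ => hC _ hx _ hy, hm, himg⟩,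
    fun ⟨m, h⟩ => ⟨fun _ hx _ hy => h.isChain.total hx hy, m, h.two_mul_le, h.image_card⟩⟩

namespace IsSymmetricChainFrom

variable (h : IsSymmetricChainFrom n m C)
include h

lemma le_sub : m ≤ n - m := by
  have := h.two_mul_le
  omega

lemma exists_mem_card_eq {j : ℕ} (hj : m ≤ j ∧ j ≤ n - m) : ∃ c ∈ C, c.card = j := by
  simpa [← mem_Icc, ← h.image_card] using hj

lemma card_mem {c : Finset (Fin n)} (hc : c ∈ C) : m ≤ c.card ∧ c.card ≤ n - m :=
  mem_Icc.1 (h.image_card ▸ mem_image_of_mem card hc)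

lemma nonempty : C.Nonempty := by
  obtain ⟨c, hc, -⟩ := h.exists_mem_card_eq ⟨le_rfl, h.le_sub⟩
  exact ⟨c, hc⟩

lemma sup_mem : C.sup id ∈ C := h.isChain.sup_mem h.nonempty

lemma inf_mem : C.inf id ∈ C := h.isChain.inf_mem h.nonempty

lemma card_sup : (C.sup id).card = n - m := by
  obtain ⟨c, hc, hcard⟩ := h.exists_mem_card_eq ⟨h.le_sub, le_rfl⟩
  have : c.card ≤ (C.sup id).card := card_le_card (le_sup (f := id) hc)
  have := h.card_mem h.sup_mem
  omega

lemma card_inf : (C.inf id).card = m := by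
  obtain ⟨c, hc, hcard⟩ := h.exists_mem_card_eq ⟨le_rfl, h.le_sub⟩
  have : (C.inf id).card ≤ c.card := card_le_card (inf_le (f := id) hc)
  have := h.card_mem h.inf_mem
  omega

lemma card_eq : C.card = n - 2 * m + 1 := by
  rw [← card_image_of_injOn h.isChain.injOn_card, h.image_card, Nat.card_Icc]
  have := h.two_mul_le
  omega

lemma two_le_card_iff : 2 ≤ C.card ↔ 2 * m < n := by
  rw [h.card_eq]; omega

lemma inf_ne_sup (hC : 2 ≤ C.card) : C.inf id ≠ C.sup id := by
  intro he
  have := h.card_inf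
  rw [he, h.card_sup] at this
  have := h.two_le_card_iff.1 hC
  omega

lemma image_card_erase_sup : (C.erase (C.sup id)).image card = Ico m (n - m) := by
  rw [image_erase_of_injOn h.isChain.injOn_card h.sup_mem, h.image_card, h.card_sup,
    Icc_erase_right]

lemma image_card_erase_inf : (C.erase (C.inf id)).image card = Ioc m (n - m) := by
  rw [image_erase_of_injOn h.isChain.injOn_card h.inf_mem, h.image_card, h.card_inf,
    Icc_erase_left]

lemma two_le_card_iff_exists_card_eq (hn : 1 ≤ n) :
    2 ≤ C.card ↔ ∃ c ∈ C, c.card = (n - 1) / 2 := by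
  rw [h.two_le_card_iff]
  constructor
  · intro hm
    exact h.exists_mem_card_eq ⟨by omega, by omega⟩
  · rintro ⟨c, hc, hcard⟩
    have := h.card_mem hc
    omega

end IsSymmetricChainFrom

lemma image_card_image_lift₀ (C : Finset (Finset (Fin n))) :
    (C.image lift₀).image card = C.image card := by
  rw [image_image]
  exact image_congr fun c _ => card_lift₀ c

lemma image_card_image_lift₁ (C : Finset (Finset (Fin n))) :
    (C.image lift₁).image card = (C.image card).image (· + 1) := by
  rw [image_image, image_image]
  exact image_congr fun c _ => card_lift₁ c

/- `C × 2` is a `2 × |C|` grid in `2^[n+1]`. It splits into two symmetric chains by peeling off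
the hook through its top corner `lift₁ (C.sup id)` (`b = true`) or through its bottom corner
`lift₀ (C.inf id)` (`b = false`), leaving `shortChain C b`. -/
def hookChain (C : Finset (Finset (Fin n))) : Bool → Finset (Finset (Fin (n + 1)))
  | true => insert (lift₁ (C.sup id)) (C.image lift₀)
  | false => insert (lift₀ (C.inf id)) (C.image lift₁)

def shortChain (C : Finset (Finset (Fin n))) : Bool → Finset (Finset (Fin (n + 1)))
  | true => (C.erase (C.sup id)).image lift₁
  | false => (C.erase (C.inf id)).image lift₀

def splitting (C : Finset (Finset (Fin n))) (b : Bool) : Finset (Finset (Finset (Fin (n + 1)))) :=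
  ({hookChain C b, shortChain C b} : Finset _).erase ∅

lemma mem_splitting {b : Bool} {D : Finset (Finset (Fin (n + 1)))} :
    D ∈ splitting C b ↔ D ≠ ∅ ∧ (D = hookChain C b ∨ D = shortChain C b) := by
  simp [splitting]

lemma disjoint_hookChain_shortChain (C : Finset (Finset (Fin n))) (b : Bool) :
    Disjoint (hookChain C b) (shortChain C b) := by
  rw [disjoint_left]
  intro x hA hB
  obtain ⟨s, rfl | rfl⟩ := exists_lift x <;> cases b <;> simp_all [hookChain, shortChain]

lemma isSymmetricChainFrom_hookChain (h : IsSymmetricChainFrom n m C) (b : Bool) :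
    IsSymmetricChainFrom (n + 1) m (hookChain C b) := by
  have hm := h.two_mul_le
  cases b
  · refine ⟨?_, by omega, ?_⟩
    · rw [hookChain, coe_insert, coe_image]
      refine (h.isChain.image_of_map_rel _ _ lift₁ fun _ _ => lift₁_subset_lift₁).insert ?_
      rintro _ ⟨c, hc, rfl⟩ _
      exact Or.inl (lift₀_subset_lift₁ (inf_le (f := id) hc))
    · rw [hookChain, image_insert, image_card_image_lift₁, h.image_card,
        image_add_right_Icc, card_lift₀, h.card_inf, insert_Icc_add_one_left_eq_Icc (by omega)]
      congr 1
      omega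
  · refine ⟨?_, by omega, ?_⟩
    · rw [hookChain, coe_insert, coe_image]
      refine (h.isChain.image_of_map_rel _ _ lift₀ fun _ _ => lift₀_subset_lift₀).insert ?_
      rintro _ ⟨c, hc, rfl⟩ _
      exact Or.inr (lift₀_subset_lift₁ (le_sup (f := id) hc))
    · rw [hookChain, image_insert, image_card_image_lift₀, h.image_card,
        card_lift₁, h.card_sup, insert_Icc_right_eq_Icc_add_one (by omega)]
      congr 1
      omega

lemma isSymmetricChainFrom_shortChain (h : IsSymmetricChainFrom n m C) (hC : 2 ≤ C.card)
    (b : Bool) :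
    IsSymmetricChainFrom (n + 1) (m + 1) (shortChain C b) := by
  have hm := h.two_le_card_iff.1 hC
  cases b
  · refine ⟨?_, by omega, ?_⟩
    · rw [shortChain, coe_image]
      exact (h.isChain.mono (coe_subset.2 (erase_subset _ _))).image_of_map_rel _ _ lift₀
        fun _ _ => lift₀_subset_lift₀
    · rw [shortChain, image_card_image_lift₀, h.image_card_erase_inf,
        ← Icc_add_one_left_eq_Ioc]
      congr 1
      omega
  · refine ⟨?_, by omega, ?_⟩
    · rw [shortChain, coe_image]
      exact (h.isChain.mono (coe_subset.2 (erase_subset _ _))).image_of_map_rel _ _ lift₁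
        fun _ _ => lift₁_subset_lift₁
    · rw [shortChain, image_card_image_lift₁, h.image_card_erase_sup,
        image_add_right_Ico, Ico_add_one_right_eq_Icc]
      congr 1
      omega

namespace IsSymmetricChainFrom

variable (h : IsSymmetricChainFrom n m C)
include h

lemma proj_mem_iff {b : Bool} {x : Finset (Fin (n + 1))} :
    proj x ∈ C ↔ x ∈ hookChain C b ∨ x ∈ shortChain C b := by
  have := h.sup_mem
  have := h.inf_mem
  obtain ⟨s, rfl | rfl⟩ := exists_lift x <;> cases b <;>
    simp [hookChain, shortChain, *] <;> grind

lemma proj_mem_of_mem_splitting {b : Bool} {D : Finset (Finset (Fin (n + 1)))}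
    (hD : D ∈ splitting C b) {x : Finset (Fin (n + 1))} (hx : x ∈ D) : proj x ∈ C := by
  obtain ⟨-, rfl | rfl⟩ := mem_splitting.1 hD
  exacts [h.proj_mem_iff.2 (Or.inl hx), h.proj_mem_iff.2 (Or.inr hx)]

lemma existsUnique_mem_splitting (b : Bool) {x : Finset (Fin (n + 1))} (hx : proj x ∈ C) :
    ∃! D, D ∈ splitting C b ∧ x ∈ D := by
  have hdisj : x ∈ hookChain C b → x ∉ shortChain C b :=
    fun hA => disjoint_left.1 (disjoint_hookChain_shortChain C b) hA
  rcases h.proj_mem_iff.1 hx with hA | hB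
  · refine ⟨_, ⟨mem_splitting.2 ⟨ne_empty_of_mem hA, Or.inl rfl⟩, hA⟩, ?_⟩
    rintro D ⟨hD, hxD⟩
    obtain ⟨-, rfl | rfl⟩ := mem_splitting.1 hD
    exacts [rfl, absurd hxD (hdisj hA)]
  · refine ⟨_, ⟨mem_splitting.2 ⟨ne_empty_of_mem hB, Or.inr rfl⟩, hB⟩, ?_⟩
    rintro D ⟨hD, hxD⟩
    obtain ⟨-, rfl | rfl⟩ := mem_splitting.1 hD
    exacts [absurd hB (hdisj hxD), rfl]

lemma isSymmetricChain_of_mem_splitting {b : Bool} {D : Finset (Finset (Fin (n + 1)))}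
    (hD : D ∈ splitting C b) : IsSymmetricChain (n + 1) D := by
  obtain ⟨hne, rfl | rfl⟩ := mem_splitting.1 hD
  · exact isSymmetricChain_iff.2 ⟨m, isSymmetricChainFrom_hookChain h b⟩
  · refine isSymmetricChain_iff.2
      ⟨m + 1, isSymmetricChainFrom_shortChain h (one_lt_card_iff_nontrivial.2 ?_) b⟩
    cases b
    · exact (erase_nonempty h.inf_mem).1 (nonempty_iff_ne_empty.2 hne).of_image
    · exact (erase_nonempty h.sup_mem).1 (nonempty_iff_ne_empty.2 hne).of_image

lemma lift₀_inf_mem_hookChain (b : Bool) : lift₀ (C.inf id) ∈ hookChain C b := by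
  cases b <;> simp [hookChain, h.inf_mem]

lemma hookChain_injective (hC : 2 ≤ C.card) : Function.Injective (hookChain C) := by
  have hsep : lift₀ (C.sup id) ∉ hookChain C false := by
    simpa [hookChain] using (h.inf_ne_sup hC).symm
  have hmem : lift₀ (C.sup id) ∈ hookChain C true := by
    simp [hookChain, h.sup_mem]
  rintro (_ | _) (_ | _) hbb' <;> first | rfl | exact absurd (hbb' ▸ hmem) hsep

end IsSymmetricChainFrom

lemma isSymmetricChainDecomposition_zero : IsSymmetricChainDecomposition 0 {{∅}} := by
  refine ⟨fun C hC => ?_, fun x => ⟨{∅}, by simp [eq_empty_of_isEmpty x], by simp⟩⟩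
  obtain rfl := mem_singleton.1 hC
  exact ⟨by simp, 0, by simp⟩

def extend (P S : Finset (Finset (Finset (Fin n)))) : Finset (Finset (Finset (Fin (n + 1)))) :=
  P.biUnion fun C => splitting C (decide (C ∈ S))

variable {P : Finset (Finset (Finset (Fin n)))}

lemma exists_isSymmetricChainFrom (hP : IsSymmetricChainDecomposition n P) (hC : C ∈ P) :
    ∃ m, IsSymmetricChainFrom n m C :=
  isSymmetricChain_iff.1 (hP.1 C hC)

lemma isSymmetricChainDecomposition_extend (hP : IsSymmetricChainDecomposition n P)
    (S : Finset (Finset (Finset (Fin n)))) :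
    IsSymmetricChainDecomposition (n + 1) (extend P S) := by
  refine ⟨fun D hD => ?_, existsUnique_mem_biUnion hP.2 proj (fun C hC D hD x hx => ?_)
    (fun C hC x hx => ?_)⟩
  · obtain ⟨C, hC, hD⟩ := mem_biUnion.1 hD
    obtain ⟨m, h⟩ := exists_isSymmetricChainFrom hP hC
    exact h.isSymmetricChain_of_mem_splitting hD
  · obtain ⟨m, h⟩ := exists_isSymmetricChainFrom hP hC
    exact h.proj_mem_of_mem_splitting hD hx
  · obtain ⟨m, h⟩ := exists_isSymmetricChainFrom hP hC
    exact h.existsUnique_mem_splitting _ hx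

lemma exists_isSymmetricChainDecomposition :
    ∀ n, ∃ P, IsSymmetricChainDecomposition n P
  | 0 => ⟨_, isSymmetricChainDecomposition_zero⟩
  | n + 1 =>
    have ⟨_, hP⟩ := exists_isSymmetricChainDecomposition n
    ⟨_, isSymmetricChainDecomposition_extend hP ∅⟩

lemma card_filter_two_le_card (hP : IsSymmetricChainDecomposition n P) (hn : 1 ≤ n) :
    (P.filter (2 ≤ ·.card)).card = n.choose ((n - 1) / 2) := by
  suffices (powersetCard ((n - 1) / 2) (univ : Finset (Fin n))).card =
      (P.filter (2 ≤ ·.card)).card by simpa using this.symm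
  refine card_bij (fun x _ => (hP.2 x).choose) (fun x hx => ?_) (fun x hx y hy hxy => ?_)
    (fun C hC => ?_)
  · obtain ⟨⟨hC, hxC⟩, -⟩ := (hP.2 x).choose_spec
    obtain ⟨m, h⟩ := exists_isSymmetricChainFrom hP hC
    exact mem_filter.2
      ⟨hC, (h.two_le_card_iff_exists_card_eq hn).2 ⟨x, hxC, (mem_powersetCard.1 hx).2⟩⟩
  · obtain ⟨⟨hC, hxC⟩, -⟩ := (hP.2 x).choose_spec
    obtain ⟨⟨-, hyC⟩, -⟩ := (hP.2 y).choose_spec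
    obtain ⟨m, h⟩ := exists_isSymmetricChainFrom hP hC
    exact h.isChain.injOn_card hxC (hxy ▸ hyC)
      ((mem_powersetCard.1 hx).2.trans (mem_powersetCard.1 hy).2.symm)
  · obtain ⟨hC, hlong⟩ := mem_filter.1 hC
    obtain ⟨m, h⟩ := exists_isSymmetricChainFrom hP hC
    obtain ⟨x, hxC, hx⟩ := (h.two_le_card_iff_exists_card_eq hn).1 hlong
    exact ⟨x, mem_powersetCard.2 ⟨subset_univ x, hx⟩,
      ((hP.2 x).choose_spec.2 C ⟨hC, hxC⟩).symm⟩

lemma hookChain_mem_extend (h : IsSymmetricChainFrom n m C) (hCP : C ∈ P)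
    (S : Finset (Finset (Finset (Fin n)))) : hookChain C (decide (C ∈ S)) ∈ extend P S :=
  mem_biUnion.2 ⟨C, hCP, mem_splitting.2
  ⟨ne_empty_of_mem (h.lift₀_inf_mem_hookChain _), Or.inl rfl⟩⟩

lemma mem_iff_mem_of_extend_eq (hP : IsSymmetricChainDecomposition n P)
    {S T : Finset (Finset (Finset (Fin n)))} (hST : extend P S = extend P T)
    (hCP : C ∈ P) (hC : 2 ≤ C.card) : C ∈ S ↔ C ∈ T := by
  obtain ⟨m, h⟩ := exists_isSymmetricChainFrom hP hCP
  obtain ⟨D, -, hD⟩ := (isSymmetricChainDecomposition_extend hP S).2 (lift₀ (C.inf id))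
  have hooks_eq := (hD _ ⟨hookChain_mem_extend h hCP S, h.lift₀_inf_mem_hookChain _⟩).trans
    (hD _ ⟨hST ▸ hookChain_mem_extend h hCP T, h.lift₀_inf_mem_hookChain _⟩).symm
  simpa using h.hookChain_injective hC hooks_eq

lemma extend_injOn (hP : IsSymmetricChainDecomposition n P) :
    Set.InjOn (extend P) ((P.filter (2 ≤ ·.card)).powerset : Set _) := by
  intro S hS T hT hST
  ext C
  by_cases hC : C ∈ P.filter (2 ≤ ·.card)
  · exact mem_iff_mem_of_extend_eq hP hST (mem_filter.1 hC).1 (mem_filter.1 hC).2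
  · exact iff_of_false (fun h => hC (mem_powerset.1 hS h)) (fun h => hC (mem_powerset.1 hT h))

theorem two_pow_choose_le_card (n : ℕ) (hn : 2 ≤ n) :
    2 ^ ((n - 1).choose ((n - 2) / 2)) ≤
      Nat.card {P : Finset (Finset (Finset (Fin n))) // IsSymmetricChainDecomposition n P} := by
  obtain ⟨m, rfl⟩ : ∃ m, n = m + 1 := ⟨n - 1, by omega⟩
  obtain ⟨P, hP⟩ := exists_isSymmetricChainDecomposition m
  rw [show (m + 1 - 2) / 2 = (m - 1) / 2 by omega, Nat.add_sub_cancel,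
    ← card_filter_two_le_card hP (by omega), ← card_powerset, ← Set.ncard_coe_finset]
  calc _ ≤ {Q | IsSymmetricChainDecomposition (m + 1) Q}.ncard :=
        Set.ncard_le_ncard_of_injOn (extend P)
          (fun S _ => isSymmetricChainDecomposition_extend hP S) (extend_injOn hP)
    _ = _ := (Nat.card_coe_set_eq _).symm

end SymmetricChain

/-- `2^[n]` has at least `2^(C(n-1,⌊(n-2)/2⌋))` symmetric chain
decompositions; in particular, at least `2^(Ω(2^n/√n))` of them. -/
theorem stmt_5 :
    (∀ n : ℕ, 2 ≤ n →
      2 ^ ((n - 1).choose ((n - 2) / 2)) ≤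
        Nat.card {P : Finset (Finset (Finset (Fin n))) //
          IsSymmetricChainDecomposition n P}) ∧
    ∃ c : ℝ, 0 < c ∧ ∃ N : ℕ, ∀ n : ℕ, N ≤ n →
      (2 : ℝ) ^ (c * 2 ^ n / Real.sqrt n) ≤
        (Nat.card {P : Finset (Finset (Finset (Fin n))) //
          IsSymmetricChainDecomposition n P} : ℝ) := by
  refine ⟨SymmetricChain.two_pow_choose_le_card, 1 / 16, by norm_num, 4, fun n hn => ?_⟩
  calc (2 : ℝ) ^ (1 / 16 * 2 ^ n / Real.sqrt n)
      ≤ 2 ^ ((n - 1).choose ((n - 2) / 2) : ℝ) :=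
        Real.rpow_le_rpow_of_exponent_le one_le_two (two_pow_div_sqrt_le_choose hn)
    _ = ((2 ^ (n - 1).choose ((n - 2) / 2) : ℕ) : ℝ) := by norm_cast
    _ ≤ _ := by exact_mod_cast SymmetricChain.two_pow_choose_le_card n (by omega)
end

section
/- Let (P, <) be a graded poset with levels A₀, ..., A_n. For each k, let G_k be the bipartite graph on (A_k, A_{k+1}) joining x ∈ A_k to y ∈ A_{k+1} when x < y. If each G_k (k = 0,...,n−1) is a normalized matching graph, then P is a normalized matching poset: for all i ≠ j and all X ⊆ A_i, |X|/|A_i| ≤ |Γ(X)|/|A_j|, where Γ(X) is the set of elements of A_j comparable to some element of X. -/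
/-!
Normalized matching is preserved by reversing the relation: for `Y ⊆ B`, the complement of
`Γᵀ(Y)` in `A` has all its neighbours in `B \ Y`, and the inequality for that complement is the
reversed inequality for `Y`. It is also preserved by composing relations through a middle set `B`:
`|X| / |A| ≤ |Γ(X)| / |B| ≤ |Γ(Γ(X))| / |C|`, which needs `|B| ≠ 0` unless `C` is empty. In a graded
poset whose minimal elements have rank `0`, a level below a nonempty level is nonempty, so
composing the consecutive-level graphs gives the property from `A_i` up to `A_j` for `i < j`, and
reversing gives it from `A_j` down to `A_i`.
-/

/-- Cross-multiplied form of `|X| / |A| ≤ |Γ(X)| / |B|`. -/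
def IsNormalizedMatching {α β : Type*} (r : α → β → Prop) (A : Set α) (B : Set β) : Prop :=
  ∀ X ⊆ A, X.ncard * B.ncard ≤ {b ∈ B | ∃ a ∈ X, r a b}.ncard * A.ncard

namespace IsNormalizedMatching

variable {α β γ : Type*} {r r' : α → β → Prop} {s : β → γ → Prop}
  {A : Set α} {B : Set β} {C : Set γ}

theorem mono [Finite β] (h : IsNormalizedMatching r A B) (hrr' : ∀ a b, r a b → r' a b) :
    IsNormalizedMatching r' A B := fun X hX =>
  (h X hX).trans <| Nat.mul_le_mul_right _ <| Set.ncard_le_ncard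
    fun b ⟨hb, a, ha, hab⟩ => ⟨hb, a, ha, hrr' a b hab⟩

protected theorem flip [Finite α] [Finite β] (h : IsNormalizedMatching r A B) :
    IsNormalizedMatching (flip r) B A := by
  intro Y hY
  set S := {a ∈ A | ∃ b ∈ Y, r a b}
  have hΓ : {b ∈ B | ∃ a ∈ A \ S, r a b} ⊆ B \ Y := by
    rintro b ⟨hb, a, ⟨ha, haS⟩, hab⟩
    exact ⟨hb, fun hbY => haS ⟨ha, b, hbY, hab⟩⟩
  have hcompl : (A \ S).ncard * B.ncard ≤ (B \ Y).ncard * A.ncard :=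
    (h _ Set.sdiff_subset).trans (Nat.mul_le_mul_right _ (Set.ncard_le_ncard hΓ))
  have hSA : S.ncard ≤ A.ncard := Set.ncard_le_ncard (Set.sep_subset _ _)
  have hAS : (A \ S).ncard = A.ncard - S.ncard := Set.ncard_sdiff (Set.sep_subset _ _)
  rw [hAS, Set.ncard_sdiff hY] at hcompl
  have hYB : Y.ncard ≤ B.ncard := Set.ncard_le_ncard hY
  show Y.ncard * A.ncard ≤ S.ncard * B.ncard
  zify [hSA, hYB] at hcompl ⊢
  linarith

theorem comp [Finite β] [Finite γ] (hr : IsNormalizedMatching r A B)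
    (hs : IsNormalizedMatching s B C) (hB : C.Nonempty → B.Nonempty) :
    IsNormalizedMatching (fun a c => ∃ b ∈ B, r a b ∧ s b c) A C := by
  intro X hX
  rcases C.eq_empty_or_nonempty with rfl | hC
  · simp
  set Y := {b ∈ B | ∃ a ∈ X, r a b}
  have hΓΓ : {c ∈ C | ∃ b ∈ Y, s b c} ⊆ {c ∈ C | ∃ a ∈ X, ∃ b ∈ B, r a b ∧ s b c} := by
    rintro c ⟨hc, b, ⟨hb, a, ha, hab⟩, hbc⟩
    exact ⟨hc, a, ha, b, hb, hab, hbc⟩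
  refine Nat.le_of_mul_le_mul_right ?_ ((Set.ncard_pos).2 (hB hC))
  calc X.ncard * C.ncard * B.ncard = X.ncard * B.ncard * C.ncard := by ring
    _ ≤ Y.ncard * A.ncard * C.ncard := Nat.mul_le_mul_right _ (hr X hX)
    _ = Y.ncard * C.ncard * A.ncard := by ring
    _ ≤ {c ∈ C | ∃ b ∈ Y, s b c}.ncard * B.ncard * A.ncard :=
      Nat.mul_le_mul_right _ (hs Y (Set.sep_subset _ _))
    _ ≤ {c ∈ C | ∃ a ∈ X, ∃ b ∈ B, r a b ∧ s b c}.ncard * B.ncard * A.ncard :=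
      Nat.mul_le_mul_right _ (Nat.mul_le_mul_right _ (Set.ncard_le_ncard hΓΓ))
    _ = _ := by ring

end IsNormalizedMatching

section GradedPoset

variable {P : Type*} [PartialOrder P] {rank : P → ℕ}

theorem exists_rank_eq_of_rank_eq_succ [IsStronglyCoatomic P]
    (hmin : ∀ x : P, IsMin x → rank x = 0) (hcov : ∀ x y : P, x ⋖ y → rank y = rank x + 1)
    {m : ℕ} {y : P} (hy : rank y = m + 1) : ∃ x, rank x = m := by
  have hy_not_min : ¬IsMin y := fun h => by simp [hmin y h] at hy
  obtain ⟨w, hw⟩ := not_isMin_iff.1 hy_not_min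
  obtain ⟨x, -, hxy⟩ := exists_le_covBy_of_lt hw
  exact ⟨x, by have := hcov x y hxy; omega⟩

theorem isNormalizedMatching_lt_of_lt [Finite P] [IsStronglyCoatomic P]
    (hmin : ∀ x : P, IsMin x → rank x = 0) (hcov : ∀ x y : P, x ⋖ y → rank y = rank x + 1)
    (hnm : ∀ k, IsNormalizedMatching (· < ·) {x : P | rank x = k} {y | rank y = k + 1})
    {i j : ℕ} (hij : i < j) :
    IsNormalizedMatching (· < ·) {x : P | rank x = i} {y | rank y = j} := by
  obtain ⟨d, rfl⟩ := Nat.exists_eq_add_of_lt hij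
  induction d with
  | zero => exact hnm i
  | succ d ih =>
    refine ((ih (by omega)).comp (hnm (i + d + 1)) ?_).mono fun a c ⟨b, _, hab, hbc⟩ =>
      hab.trans hbc
    rintro ⟨y, hy⟩
    exact exists_rank_eq_of_rank_eq_succ hmin hcov hy

end GradedPoset

theorem stmt_7_general {P : Type*} [Fintype P] [PartialOrder P] (n : ℕ) (rank : P → ℕ)
    (hmin : ∀ x : P, IsMin x → rank x = 0)
    (hcov : ∀ x y : P, x ⋖ y → rank y = rank x + 1)
    (hnm : ∀ k : ℕ, ∀ X ⊆ {x : P | rank x = k},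
      X.ncard * {y : P | rank y = k + 1}.ncard ≤
        {y : P | rank y = k + 1 ∧ ∃ x ∈ X, x < y}.ncard * {x : P | rank x = k}.ncard) :
    ∀ i j : ℕ, i ≤ n → j ≤ n → i ≠ j → ∀ X ⊆ {x : P | rank x = i},
      X.ncard * {y : P | rank y = j}.ncard ≤
        {y : P | rank y = j ∧ ∃ x ∈ X, x < y ∨ y < x}.ncard *
          {x : P | rank x = i}.ncard := by
  intro i j _ _ hij X hX
  have hup {i j : ℕ} (h : i < j) := isNormalizedMatching_lt_of_lt hmin hcov hnm h
  rcases hij.lt_or_gt with hij | hji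
  · exact (hup hij).mono (fun _ _ h => Or.inl h) X hX
  · exact (hup hji).flip.mono (fun _ _ h => Or.inr h) X hX

/-- Let `P` be a finite graded poset with rank function `rank` (levels
`A_k = {x | rank x = k}`, `k ≤ n`). If for each `k` the bipartite comparability graph
between consecutive levels `A_k` and `A_{k+1}` is a normalized matching graph, then
`P` is a normalized matching poset: for all `i ≠ j` and `X ⊆ A_i`,
`|X|/|A_i| ≤ |Γ(X)|/|A_j|`. -/
theorem stmt_7 {P : Type*} [Fintype P] [PartialOrder P] (n : ℕ) (rank : P → ℕ)
    (hle : ∀ x, rank x ≤ n)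
    (hmin : ∀ x : P, IsMin x → rank x = 0)
    (hcov : ∀ x y : P, x ⋖ y → rank y = rank x + 1)
    (hnm : ∀ k : ℕ, ∀ X ⊆ {x : P | rank x = k},
      X.ncard * {y : P | rank y = k + 1}.ncard ≤
        {y : P | rank y = k + 1 ∧ ∃ x ∈ X, x < y}.ncard * {x : P | rank x = k}.ncard) :
    ∀ i j : ℕ, i ≤ n → j ≤ n → i ≠ j → ∀ X ⊆ {x : P | rank x = i},
      X.ncard * {y : P | rank y = j}.ncard ≤
        {y : P | rank y = j ∧ ∃ x ∈ X, x < y ∨ y < x}.ncard *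
          {x : P | rank x = i}.ncard :=
  stmt_7_general n rank hmin hcov hnm
end

section
/- For any x ⊆ [n] and i ∈ [n], if the pair pr_x(i) = j exists (in the signature construction), then pr_x(j) exists and equals i; moreover sg(x)_i = 1 − sg(x)_j, i.e., exactly one of i, j belongs to x. -/
/-!
Read `k ↦ c_x(i, k)` as a walk that moves by `±1` at each step. Starting at `c_x(i, i) = 1` for
`i ∈ x`, it stays positive until its first zero `j`, so the last step is down, i.e. `j ∉ x`;
and a later start `i' ∈ (i, j)` with `c_x(i', j) = 0` would give the earlier zero
`c_x(i, i' - 1) = c_x(i, j) - c_x(i', j) = 0`. The case `i ∉ x` is the mirror image.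
-/

open Finset

/-- `c_x(i,j) = |x ∩ [i,j]| - |[i,j] \ x|`. -/
def cfun (x : Finset ℕ) (i j : ℕ) : ℤ :=
  ((Finset.Icc i j ∩ x).card : ℤ) - ((Finset.Icc i j \ x).card : ℤ)

theorem pos_iff_pos_of_forall_ne_zero {f : ℕ → ℤ} (hf : ∀ k, |f (k + 1) - f k| ≤ 1)
    {a b : ℕ} (hab : a ≤ b) (hne : ∀ k ∈ Icc a b, f k ≠ 0) : 0 < f a ↔ 0 < f b := by
  induction b, hab using Nat.le_induction with
  | base => rfl
  | succ b hab ih =>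
    have hb := hne b (mem_Icc.2 ⟨hab, by omega⟩)
    have hb1 := hne (b + 1) (mem_Icc.2 ⟨by omega, le_rfl⟩)
    have hstep := abs_le.1 (hf b)
    rw [ih fun k hk => hne k (mem_Icc.2 ⟨(mem_Icc.1 hk).1, by grind⟩)]
    omega

namespace cfun

variable (x : Finset ℕ)

theorem eq_sum (i j : ℕ) : cfun x i j = ∑ k ∈ Icc i j, if k ∈ x then (1 : ℤ) else -1 := by
  rw [sum_ite, sum_const, sum_const, filter_mem_eq_inter, cfun]
  simp [sdiff_eq_filter, sub_eq_add_neg]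

theorem add {i m j : ℕ} (him : i ≤ m + 1) (hmj : m ≤ j) :
    cfun x i j = cfun x i m + cfun x (m + 1) j := by
  rw [eq_sum, eq_sum, eq_sum, ← sum_union]
  · congr 1
    ext k
    simp only [mem_union, mem_Icc]
    omega
  · simp only [disjoint_left, mem_Icc]
    omega

theorem self (k : ℕ) : cfun x k k = if k ∈ x then 1 else -1 := by
  simp [eq_sum]

theorem self_of_mem {k : ℕ} (hk : k ∈ x) : cfun x k k = 1 := by
  simp [self, hk]

theorem self_of_notMem {k : ℕ} (hk : k ∉ x) : cfun x k k = -1 := by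
  simp [self, hk]

theorem abs_self (k : ℕ) : |cfun x k k| = 1 := by
  by_cases hk : k ∈ x <;> simp [self, hk]

theorem of_lt {i j : ℕ} (hji : j < i) : cfun x i j = 0 := by
  simp [cfun, Icc_eq_empty_of_lt hji]

theorem abs_succ_right_sub_le (i k : ℕ) : |cfun x i (k + 1) - cfun x i k| ≤ 1 := by
  rcases le_or_gt i (k + 1) with hik | hki
  · rw [add x hik (Nat.le_succ k), add_sub_cancel_left, abs_self]
  · rw [of_lt x hki, of_lt x (by omega), sub_self, abs_zero]
    exact zero_le_one

theorem abs_succ_left_sub_le (k j : ℕ) : |cfun x (k + 1) j - cfun x k j| ≤ 1 := by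
  rcases le_or_gt k j with hkj | hjk
  · rw [add x (Nat.le_succ k) hkj, sub_add_cancel_right, abs_neg, abs_self]
  · rw [of_lt x hjk, of_lt x (by omega), sub_self, abs_zero]
    exact zero_le_one

theorem pos_of_mem {i j : ℕ} (hi : i ∈ x) (hij : i ≤ j)
    (hne : ∀ k ∈ Ioc i j, cfun x i k ≠ 0) : 0 < cfun x i j := by
  refine (pos_iff_pos_of_forall_ne_zero (abs_succ_right_sub_le x i) hij fun k hk => ?_).1
    (by simp [self_of_mem x hi])
  rcases (mem_Icc.1 hk).1.eq_or_lt with rfl | hik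
  · simp [self_of_mem x hi]
  · exact hne k (mem_Ioc.2 ⟨hik, (mem_Icc.1 hk).2⟩)

theorem neg_of_notMem {i j : ℕ} (hi : i ∉ x) (hji : j ≤ i)
    (hne : ∀ k ∈ Ico j i, cfun x k i ≠ 0) : cfun x j i < 0 := by
  have hne' : ∀ k ∈ Icc j i, cfun x k i ≠ 0 := fun k hk => by
    rcases (mem_Icc.1 hk).2.eq_or_lt with rfl | hki
    · simp [self_of_notMem x hi]
    · exact hne k (mem_Ico.2 ⟨(mem_Icc.1 hk).1, hki⟩)
  have hsign := pos_iff_pos_of_forall_ne_zero (f := fun k => cfun x k i)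
    (fun k => abs_succ_left_sub_le x k i) hji hne'
  simp only [self_of_notMem x hi] at hsign
  have := hne' j (mem_Icc.2 ⟨le_rfl, hji⟩)
  omega

theorem notMem_and_isGreatest_of_isLeast {n i j : ℕ} (hi : 1 ≤ i) (hix : i ∈ x)
    (hj : IsLeast {j' | i < j' ∧ j' ≤ n ∧ cfun x i j' = 0} j) :
    j ∉ x ∧ IsGreatest {i' | 1 ≤ i' ∧ i' < j ∧ cfun x i' j = 0} i := by
  obtain ⟨⟨hij, hjn, hzero⟩, hmin⟩ := hj
  have hne : ∀ k ∈ Ioc i (j - 1), cfun x i k ≠ 0 := fun k hk h0 => by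
    have := hmin ⟨(mem_Ioc.1 hk).1, by grind, h0⟩
    grind
  refine ⟨fun hjx => ?_, ⟨hi, hij, hzero⟩, fun i' ⟨_, hi'j, hzero'⟩ => ?_⟩
  · have hsplit := add x (by omega : i ≤ j - 1 + 1) (by omega : j - 1 ≤ j)
    rw [Nat.sub_add_cancel (by omega), self_of_mem x hjx] at hsplit
    have := pos_of_mem x hix (by omega : i ≤ j - 1) hne
    omega
  · by_contra! hii'
    have hsplit := add x (by omega : i ≤ i' - 1 + 1) (by omega : i' - 1 ≤ j)
    rw [Nat.sub_add_cancel (by omega)] at hsplit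
    have := pos_of_mem x hix (by omega : i ≤ i' - 1) fun k hk =>
      hne k (mem_Ioc.2 ⟨(mem_Ioc.1 hk).1, by grind⟩)
    omega

theorem mem_and_isLeast_of_isGreatest {n i j : ℕ} (hi : i ≤ n) (hix : i ∉ x)
    (hj : IsGreatest {j' | 1 ≤ j' ∧ j' < i ∧ cfun x j' i = 0} j) :
    j ∈ x ∧ IsLeast {i' | j < i' ∧ i' ≤ n ∧ cfun x j i' = 0} i := by
  obtain ⟨⟨hj1, hji, hzero⟩, hmax⟩ := hj
  have hne : ∀ k ∈ Ico (j + 1) i, cfun x k i ≠ 0 := fun k hk h0 => by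
    have := hmax ⟨by grind, (mem_Ico.1 hk).2, h0⟩
    grind
  refine ⟨by_contra fun hjx => ?_, ⟨hji, hi, hzero⟩, fun i' ⟨hji', _, hzero'⟩ => ?_⟩
  · have hsplit := add x (by omega : j ≤ j + 1) hji.le
    rw [self_of_notMem x hjx] at hsplit
    have := neg_of_notMem x hix (by omega : j + 1 ≤ i) hne
    omega
  · by_contra! hi'i
    have hsplit := add x (by omega : j ≤ i' + 1) hi'i.le
    have := neg_of_notMem x hix (by omega : i' + 1 ≤ i) fun k hk =>
      hne k (mem_Ico.2 ⟨by grind, (mem_Ico.1 hk).2⟩)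
    omega

end cfun

theorem stmt_8_general (n : ℕ) (x : Finset ℕ)
    (i j : ℕ) (hi : i ∈ Finset.Icc 1 n) :
    ((i ∈ x ∧ IsLeast {j' | i < j' ∧ j' ≤ n ∧ cfun x i j' = 0} j) →
      (j ∉ x ∧ IsGreatest {i' | 1 ≤ i' ∧ i' < j ∧ cfun x i' j = 0} i)) ∧
    ((i ∉ x ∧ IsGreatest {j' | 1 ≤ j' ∧ j' < i ∧ cfun x j' i = 0} j) →
      (j ∈ x ∧ IsLeast {i' | j < i' ∧ i' ≤ n ∧ cfun x j i' = 0} i)) := by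
  obtain ⟨hi1, hin⟩ := mem_Icc.1 hi
  exact ⟨fun ⟨hix, hj⟩ => cfun.notMem_and_isGreatest_of_isLeast x hi1 hix hj,
    fun ⟨hix, hj⟩ => cfun.mem_and_isLeast_of_isGreatest x hin hix hj⟩

/-- in the signature construction, if `j = pr_x(i)` exists then
`pr_x(j)` exists and equals `i`, and exactly one of `i`, `j` belongs to `x`
(`sg(x)_i = 1 - sg(x)_j`). Both cases (`i ∈ x` and `i ∉ x`) are stated. -/
theorem stmt_8 (n : ℕ) (x : Finset ℕ) (hx : x ⊆ Finset.Icc 1 n)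
    (i j : ℕ) (hi : i ∈ Finset.Icc 1 n) :
    ((i ∈ x ∧ IsLeast {j' | i < j' ∧ j' ≤ n ∧ cfun x i j' = 0} j) →
      (j ∉ x ∧ IsGreatest {i' | 1 ≤ i' ∧ i' < j ∧ cfun x i' j = 0} i)) ∧
    ((i ∉ x ∧ IsGreatest {j' | 1 ≤ j' ∧ j' < i ∧ cfun x j' i = 0} j) →
      (j ∈ x ∧ IsLeast {i' | j < i' ∧ i' ≤ n ∧ cfun x j i' = 0} i)) :=
  stmt_8_general n x i j hi
end

section
/- For any x ⊆ [n], every element of the set *(x) \ x (positions not in x with signature *) is smaller than every element of x ∩ *(x) (positions in x with signature *). -/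
/-- `sg(x)_i = *`: position `i` has no pair in the signature construction. -/
def SgStar (n : ℕ) (x : Finset ℕ) (i : ℕ) : Prop :=
  (i ∈ x ∧ ¬∃ j, i < j ∧ j ≤ n ∧ cfun x i j = 0) ∨
  (i ∉ x ∧ ¬∃ j, 1 ≤ j ∧ j < i ∧ cfun x j i = 0)

/-!
If `j ≤ i` with `j ∈ x` and `i ∉ x` were both starred, then `c_x(j,i)` would be positive and
negative at once: `k ↦ c_x(j,k)` starts at `1` and moves by steps of size one, so it stays positive
until it first vanishes, and it does not vanish on `(j, n]`; symmetrically `k ↦ c_x(k,i)` stays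
negative on `[1, i]`.
-/

open Finset

theorem Int.exists_mem_Icc_eq_of_abs_sub_le_one {f : ℕ → ℤ} (hf : ∀ k, |f (k + 1) - f k| ≤ 1)
    {a b : ℕ} (hab : a ≤ b) {c : ℤ} (hcb : f b ≤ c) (hca : c ≤ f a) :
    ∃ k ∈ Icc a b, f k = c := by
  induction b, hab using Nat.le_induction with
  | base => exact ⟨a, by simp, le_antisymm hcb hca⟩
  | succ b hab ih =>
    by_cases hbc : f b ≤ c
    · obtain ⟨k, hk, hfk⟩ := ih hbc
      exact ⟨k, Icc_subset_Icc_right b.le_succ hk, hfk⟩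
    · have := abs_le.mp (hf b)
      exact ⟨b + 1, by simp; omega, by omega⟩

lemma cfun_eq_sum (x : Finset ℕ) (a b : ℕ) :
    cfun x a b = ∑ k ∈ Icc a b, if k ∈ x then 1 else -1 := by
  rw [cfun, sum_ite, sum_const, sum_const, filter_mem_eq_inter, ← sdiff_eq_filter]
  simp only [nsmul_eq_mul, mul_one, mul_neg]
  ring

lemma cfun_self (x : Finset ℕ) (a : ℕ) : cfun x a a = if a ∈ x then 1 else -1 := by
  rw [cfun_eq_sum, Icc_self, sum_singleton]

lemma abs_ite_mem_le_one (x : Finset ℕ) (k : ℕ) : |(if k ∈ x then 1 else -1 : ℤ)| ≤ 1 := by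
  split_ifs <;> simp

lemma abs_cfun_succ_right_sub_le_one (x : Finset ℕ) (a b : ℕ) :
    |cfun x a (b + 1) - cfun x a b| ≤ 1 := by
  rcases le_or_gt a (b + 1) with hab | hab
  · rw [cfun_eq_sum, cfun_eq_sum, sum_Icc_succ_top hab, add_sub_cancel_left]
    exact abs_ite_mem_le_one x (b + 1)
  · simp [cfun_eq_sum, Icc_eq_empty_of_lt hab, Icc_eq_empty_of_lt (b.lt_succ_self.trans hab)]

lemma abs_cfun_succ_left_sub_le_one (x : Finset ℕ) (a b : ℕ) :
    |cfun x (a + 1) b - cfun x a b| ≤ 1 := by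
  rcases le_or_gt a b with hab | hab
  · rw [cfun_eq_sum, cfun_eq_sum, Icc_eq_cons_Ioc hab, sum_cons, ← Icc_add_one_left_eq_Ioc,
      sub_add_cancel_right, abs_neg]
    exact abs_ite_mem_le_one x a
  · simp [cfun_eq_sum, Icc_eq_empty_of_lt hab, Icc_eq_empty_of_lt (hab.trans a.lt_succ_self)]

lemma cfun_pos_of_mem {n : ℕ} {x : Finset ℕ} {j : ℕ} (hj : j ∈ x)
    (hzero : ¬∃ k, j < k ∧ k ≤ n ∧ cfun x j k = 0) {k : ℕ} (hjk : j ≤ k) (hkn : k ≤ n) :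
    0 < cfun x j k := by
  by_contra! hnonpos
  have hj_one : cfun x j j = 1 := by simp [cfun_self, hj]
  obtain ⟨m, hm, hm_zero⟩ := Int.exists_mem_Icc_eq_of_abs_sub_le_one
    (abs_cfun_succ_right_sub_le_one x j) hjk hnonpos (by omega)
  have hjm : j ≠ m := by rintro rfl; omega
  rw [mem_Icc] at hm
  exact hzero ⟨m, by omega, by omega, hm_zero⟩

lemma cfun_neg_of_notMem {x : Finset ℕ} {i : ℕ} (hi : i ∉ x)
    (hzero : ¬∃ k, 1 ≤ k ∧ k < i ∧ cfun x k i = 0) {k : ℕ} (hk : 1 ≤ k) (hki : k ≤ i) :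
    cfun x k i < 0 := by
  by_contra! hnonneg
  have hi_neg_one : cfun x i i = -1 := by simp [cfun_self, hi]
  obtain ⟨m, hm, hm_zero⟩ := Int.exists_mem_Icc_eq_of_abs_sub_le_one
    (f := (cfun x · i)) (abs_cfun_succ_left_sub_le_one x · i) hki (by omega) hnonneg
  have hmi : m ≠ i := by rintro rfl; omega
  rw [mem_Icc] at hm
  exact hzero ⟨m, by omega, by omega, hm_zero⟩

theorem stmt_9_general (n : ℕ) (x : Finset ℕ) :
    ∀ i ∈ Finset.Icc 1 n, ∀ j ∈ Finset.Icc 1 n,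
      SgStar n x i → i ∉ x → SgStar n x j → j ∈ x → i < j := by
  intro i hi j hj hsi hix hsj hjx
  rw [Finset.mem_Icc] at hi hj
  by_contra! hji
  obtain ⟨hix', -⟩ | ⟨-, hzero_i⟩ := hsi
  · exact hix hix'
  obtain ⟨-, hzero_j⟩ | ⟨hjx', -⟩ := hsj
  · have hpos := cfun_pos_of_mem hjx hzero_j hji hi.2
    have hneg := cfun_neg_of_notMem hix hzero_i hj.1 hji
    exact hneg.not_gt hpos
  · exact hjx' hjx

/-- every starred position not in `x` is smaller than every starred
position in `x`. -/
theorem stmt_9 (n : ℕ) (x : Finset ℕ) (hx : x ⊆ Finset.Icc 1 n) :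
    ∀ i ∈ Finset.Icc 1 n, ∀ j ∈ Finset.Icc 1 n,
      SgStar n x i → i ∉ x → SgStar n x j → j ∈ x → i < j :=
  stmt_9_general n x
end

section
/- Let k ≥ n/2 + 1, x ∈ [n]^(k), and let i₁ < ... < i_t be the elements of x ∩ *(x). Let p(x) denote the unique element of the ∼-equivalence class (same signature) of x with |x| + |p(x)| = n. For b ∈ x and y = x \ {b}: one has p(x) ⊆ p(y) ⊆ y ⊆ x if and only if b = i_u for some u ∈ {1,...,2k−n}. In particular, in the poset (Q, <) defined by y < x iff p(x) ⊆ p(y) ⊆ y ⊆ x, each x ∈ [n]^(k) covers exactly 2k − n elements of [n]^(k−1). -/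
-- The signature value of position `i` in `x ⊆ [n]`: `1`, `0`, or `2` (for `*`).
open Classical in
noncomputable def sgv (n : ℕ) (x : Finset ℕ) (i : ℕ) : ℕ :=
  if i ∈ x then (if ∃ j ∈ Finset.Ioc i n, cfun x i j = 0 then 1 else 2)
  else (if ∃ j ∈ Finset.Ico 1 i, cfun x j i = 0 then 0 else 2)

/-!
Read the members of `x` as `(` and the other elements of `[n]` as `)`. Then `sgv` marks
matched brackets by `1` and `0` and unmatched ones by `*` (`2`). In terms of the walk
`m ↦ cfun x 1 m`, an unmatched `)` at `j` precedes an unmatched `(` at `i`, as otherwise the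
walk at `j` would be both above and below its height at `i - 1`. So a set is determined by
its signature and its size: it consists of its `1`s and its topmost stars. Hence `p x ⊆ x`,
and `p x` misses exactly the `2k - n` lowest stars of `x`.

Removing an unmatched `(` at `b` turns it into a `)` that can match at most the last
unmatched `(` before it, and leaves the signature above `b` unchanged. So if `b ∉ p x`,
every star of `p x` lies above `b` and stays among the top stars of `p (x \ {b})`, which has
one element more.
-/

open Finset

lemma exists_eq_of_abs_step_le_one {f : ℕ → ℤ} (hf : ∀ m, |f (m + 1) - f m| ≤ 1)
    {a b : ℕ} {c : ℤ} (hab : a ≤ b) (hc : f a ≤ c ∧ c ≤ f b ∨ f b ≤ c ∧ c ≤ f a) :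
    ∃ m ∈ Icc a b, f m = c := by
  induction b, hab using Nat.le_induction with
  | base => exact ⟨a, by simp, by omega⟩
  | succ b hab ih =>
    by_cases h : f a ≤ c ∧ c ≤ f b ∨ f b ≤ c ∧ c ≤ f a
    · obtain ⟨m, hm, hfm⟩ := ih h
      exact ⟨m, Icc_subset_Icc_right b.le_succ hm, hfm⟩
    · have := abs_le.1 (hf b)
      exact ⟨b + 1, by simp; omega, by omega⟩

lemma mem_iff_card_filter_lt_lt_card {α : Type*} [LinearOrder α] {T U : Finset α}
    (hUT : U ⊆ T) (hU : ∀ u ∈ U, ∀ t ∈ T, u ≤ t → t ∈ U) {i : α} (hi : i ∈ T) :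
    i ∈ U ↔ #(T.filter (i < ·)) < #U := by
  constructor
  · intro hiU
    refine card_lt_card ((ssubset_iff_of_subset fun t ht => ?_).2 ⟨i, hiU, by simp⟩)
    rw [mem_filter] at ht
    exact hU i hiU t ht.1 ht.2.le
  · intro hcard
    by_contra hiU
    refine hcard.not_ge (card_le_card fun u hu => mem_filter.2 ⟨hUT hu, ?_⟩)
    exact lt_of_not_ge fun hui => hiU (hU u hu i hi hui)

-- Members of `z` are up-steps (`(`), non-members down-steps (`)`).
def walk (z : Finset ℕ) (m : ℕ) : ℤ :=
  ∑ i ∈ Ioc 0 m, if i ∈ z then 1 else -1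

section Walk

variable {z : Finset ℕ} {i : ℕ}

lemma walk_succ (z : Finset ℕ) (m : ℕ) :
    walk z (m + 1) = walk z m + if m + 1 ∈ z then 1 else -1 :=
  sum_Ioc_succ_top m.zero_le _

lemma abs_walk_succ_sub_le_one (z : Finset ℕ) (m : ℕ) : |walk z (m + 1) - walk z m| ≤ 1 := by
  rw [walk_succ]; split_ifs <;> simp

lemma walk_of_mem (hi : i ∈ z) (hi1 : 1 ≤ i) : walk z i = walk z (i - 1) + 1 := by
  obtain ⟨m, rfl⟩ := Nat.exists_eq_add_of_le' hi1
  simp [walk_succ, hi]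

lemma walk_of_notMem (hi : i ∉ z) (hi1 : 1 ≤ i) : walk z i = walk z (i - 1) - 1 := by
  obtain ⟨m, rfl⟩ := Nat.exists_eq_add_of_le' hi1
  simp [walk_succ, hi, sub_eq_add_neg]

lemma cfun_eq_walk_sub (z : Finset ℕ) {i j : ℕ} (hi1 : 1 ≤ i) (hij : i ≤ j + 1) :
    cfun z i j = walk z j - walk z (i - 1) := by
  have hIcc : Icc i j = Ioc (i - 1) j := by ext; simp; omega
  rw [walk, walk, ← sum_Ioc_consecutive _ (Nat.zero_le (i - 1)) (by omega : i - 1 ≤ j),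
    add_sub_cancel_left, ← hIcc, sum_ite, sum_const, sum_const, cfun, filter_mem_eq_inter,
    ← sdiff_eq_filter]
  simp [inter_comm, sub_eq_add_neg]

lemma sgv_eq_two_iff_of_mem (n : ℕ) (hi : i ∈ z) (hi1 : 1 ≤ i) :
    sgv n z i = 2 ↔ ∀ j, i ≤ j → j ≤ n → walk z (i - 1) < walk z j := by
  have hstep := walk_of_mem hi hi1
  have hsgv : sgv n z i = 2 ↔ ∀ j ∈ Ioc i n, cfun z i j ≠ 0 := by
    unfold sgv; split_ifs with h <;> simpa [and_assoc] using h
  simp only [hsgv, mem_Ioc, and_imp]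
  constructor
  · intro h j hij hjn
    by_contra! hle
    obtain ⟨m, hm, hwm⟩ := exists_eq_of_abs_step_le_one (abs_walk_succ_sub_le_one z) hij
      (c := walk z (i - 1)) (Or.inr ⟨hle, by omega⟩)
    rw [mem_Icc] at hm
    have hmi : m ≠ i := by rintro rfl; omega
    exact h m (by omega) (by omega) (by rw [cfun_eq_walk_sub z hi1 (by omega)]; omega)
  · intro h j hij hjn
    have := h j hij.le hjn
    rw [cfun_eq_walk_sub z hi1 (by omega)]
    omega

lemma sgv_eq_two_iff_of_notMem (n : ℕ) (hi : i ∉ z) (hi1 : 1 ≤ i) :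
    sgv n z i = 2 ↔ ∀ m < i, walk z i < walk z m := by
  have hstep := walk_of_notMem hi hi1
  have hsgv : sgv n z i = 2 ↔ ∀ l ∈ Ico 1 i, cfun z l i ≠ 0 := by
    unfold sgv; split_ifs with h <;> simpa [and_assoc] using h
  simp only [hsgv, mem_Ico, and_imp]
  constructor
  · intro h m hmi
    by_contra! hle
    obtain ⟨m', hm', hwm'⟩ := exists_eq_of_abs_step_le_one (abs_walk_succ_sub_le_one z)
      (by omega : m ≤ i - 1) (c := walk z i) (Or.inl ⟨hle, by omega⟩)
    rw [mem_Icc] at hm'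
    have hm'i : m' ≠ i - 1 := by rintro rfl; omega
    exact h (m' + 1) (by omega) (by omega)
      (by rw [cfun_eq_walk_sub z (by omega) (by omega), Nat.add_sub_cancel]; omega)
  · intro h l hl1 hli
    have := h (l - 1) (by omega)
    rw [cfun_eq_walk_sub z hl1 (by omega)]
    omega

end Walk

-- `sigStars n z` is the paper's `*(z)`, and `SigEquiv` its relation `∼` of equal signatures.
noncomputable def sigOnes (n : ℕ) (z : Finset ℕ) : Finset ℕ :=
  (Icc 1 n).filter (fun i => sgv n z i = 1)

noncomputable def sigStars (n : ℕ) (z : Finset ℕ) : Finset ℕ :=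
  (Icc 1 n).filter (fun i => sgv n z i = 2)

def SigEquiv (n : ℕ) (w z : Finset ℕ) : Prop := ∀ i ∈ Icc 1 n, sgv n w i = sgv n z i

section Signature

variable {n i : ℕ} {z w : Finset ℕ}

lemma sgv_of_mem (hi : i ∈ z) : sgv n z i = 1 ∨ sgv n z i = 2 := by
  unfold sgv; split_ifs <;> simp

lemma sgv_of_notMem (hi : i ∉ z) : sgv n z i = 0 ∨ sgv n z i = 2 := by
  unfold sgv; split_ifs <;> simp

lemma mem_of_sgv_eq_one (h : sgv n z i = 1) : i ∈ z := by
  by_contra hi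
  rcases sgv_of_notMem (n := n) hi with h' | h' <;> omega

lemma sgv_eq_of_mem_iff_of_eq_two_iff (hmem : i ∈ w ↔ i ∈ z)
    (h2 : sgv n w i = 2 ↔ sgv n z i = 2) : sgv n w i = sgv n z i := by
  by_cases hi : i ∈ z
  · rcases sgv_of_mem (n := n) hi with h | h <;>
      rcases sgv_of_mem (n := n) (hmem.2 hi) with h' | h' <;> omega
  · rcases sgv_of_notMem (n := n) hi with h | h <;>
      rcases sgv_of_notMem (n := n) (mt hmem.1 hi) with h' | h' <;> omega

lemma lt_of_sgv_eq_two {j : ℕ} (hi : i ∈ z) (hsi : sgv n z i = 2) (hj : j ∉ z)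
    (hsj : sgv n z j = 2) (hi1 : 1 ≤ i) (hj1 : 1 ≤ j) (hjn : j ≤ n) : j < i := by
  by_contra! hij
  have := (sgv_eq_two_iff_of_mem n hi hi1).1 hsi j hij hjn
  have := (sgv_eq_two_iff_of_notMem n hj hj1).1 hsj (i - 1) (by omega)
  omega

lemma SigEquiv.sigOnes_eq (h : SigEquiv n w z) : sigOnes n w = sigOnes n z :=
  filter_congr fun i hi => by rw [h i hi]

lemma SigEquiv.sigStars_eq (h : SigEquiv n w z) : sigStars n w = sigStars n z :=
  filter_congr fun i hi => by rw [h i hi]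

lemma card_eq_card_sigOnes_add (hz : z ⊆ Icc 1 n) :
    #z = #(sigOnes n z) + #(z.filter (fun i => sgv n z i = 2)) := by
  have hones : sigOnes n z = z.filter (fun i => sgv n z i = 1) := by
    ext i
    simp only [sigOnes, mem_filter]
    exact ⟨fun h => ⟨mem_of_sgv_eq_one h.2, h.2⟩, fun h => ⟨hz h.1, h.2⟩⟩
  have hstars : z.filter (fun i => sgv n z i = 2) = z.filter (fun i => ¬ sgv n z i = 1) :=
    filter_congr fun i hi => by rcases sgv_of_mem (n := n) hi with h | h <;> omega
  rw [hones, hstars, card_filter_add_card_filter_not]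

lemma mem_iff_card_lt (hw : w ⊆ Icc 1 n) (hi : i ∈ sigStars n w) :
    i ∈ w ↔ #((sigStars n w).filter (i < ·)) + #(sigOnes n w) < #w := by
  have hup : ∀ u ∈ w.filter (fun i => sgv n w i = 2), ∀ t ∈ sigStars n w, u ≤ t →
      t ∈ w.filter (fun i => sgv n w i = 2) := by
    intro u hu t ht hut
    simp only [sigStars, mem_filter, mem_Icc] at hu ht ⊢
    refine ⟨by_contra fun htw => ?_, ht.2⟩
    have := lt_of_sgv_eq_two hu.1 hu.2 htw ht.2 (mem_Icc.1 (hw hu.1)).1 ht.1.1 ht.1.2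
    omega
  have hsub : w.filter (fun i => sgv n w i = 2) ⊆ sigStars n w := fun t ht => by
    simp only [sigStars, mem_filter] at ht ⊢
    exact ⟨hw ht.1, ht.2⟩
  have hi2 : sgv n w i = 2 := (mem_filter.1 hi).2
  have hiff := mem_iff_card_filter_lt_lt_card hsub hup hi
  simp only [mem_filter, hi2, and_true] at hiff
  rw [hiff, card_eq_card_sigOnes_add hw]
  omega

lemma subset_of_sigEquiv (hw : w ⊆ Icc 1 n) (hz : z ⊆ Icc 1 n) (h : SigEquiv n w z)
    (hcard : #w ≤ #z) : w ⊆ z := by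
  intro i hi
  have hiI := hw hi
  rcases sgv_of_mem (n := n) hi with h1 | h2
  · exact mem_of_sgv_eq_one (n := n) (by rwa [← h i hiI])
  · have hiw : i ∈ sigStars n w := mem_filter.2 ⟨hiI, h2⟩
    have hiz : i ∈ sigStars n z := h.sigStars_eq ▸ hiw
    have := (mem_iff_card_lt hw hiw).1 hi
    rw [h.sigStars_eq, h.sigOnes_eq] at this
    exact (mem_iff_card_lt hz hiz).2 (by omega)

end Signature

section Erase

variable {n b i : ℕ} {x : Finset ℕ}

lemma walk_erase (hb : b ∈ x) (hb1 : 1 ≤ b) (m : ℕ) :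
    walk (x.erase b) m = walk x m - if b ≤ m then 2 else 0 := by
  induction m with
  | zero => simp [walk, show ¬ b ≤ 0 by omega]
  | succ m ih =>
    rw [walk_succ, walk_succ, ih]
    by_cases hbm : b = m + 1
    · subst hbm; simp [hb]; ring
    · simp only [mem_erase, Ne, Ne.symm hbm, not_false_eq_true, true_and]
      split_ifs <;> omega

lemma sgv_erase_of_lt_of_le (hb : b ∈ x) (hb1 : 1 ≤ b) (hsb : sgv n x b = 2) (hbi : b < i)
    (hin : i ≤ n) : sgv n (x.erase b) i = sgv n x i := by
  have hwalk := walk_erase hb hb1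
  refine sgv_eq_of_mem_iff_of_eq_two_iff (by simp [hbi.ne']) ?_
  by_cases hi : i ∈ x
  · rw [sgv_eq_two_iff_of_mem n (mem_erase.2 ⟨hbi.ne', hi⟩) (by omega),
      sgv_eq_two_iff_of_mem n hi (by omega)]
    refine forall_congr' fun j => forall_congr' fun hij => forall_congr' fun _ => ?_
    rw [hwalk, hwalk, if_pos (by omega), if_pos (by omega), sub_lt_sub_iff_right]
  · have hbi' := (sgv_eq_two_iff_of_mem n hb hb1).1 hsb i hbi.le hin
    have hbstep := walk_of_mem hb hb1
    rw [sgv_eq_two_iff_of_notMem n (fun h => hi (mem_of_mem_erase h)) (by omega),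
      sgv_eq_two_iff_of_notMem n hi (by omega)]
    refine iff_of_false (fun h => ?_) (fun h => ?_)
    · have := h b hbi
      rw [hwalk, hwalk, if_pos hbi.le, if_pos le_rfl] at this
      omega
    · have := h (b - 1) (by omega)
      omega

lemma sgv_erase_of_notMem_of_lt (hb : b ∈ x) (hb1 : 1 ≤ b) (hi : i ∉ x) (hi1 : 1 ≤ i)
    (hib : i < b) : sgv n (x.erase b) i = sgv n x i := by
  have hwalk := walk_erase hb hb1
  have hi' : i ∉ x.erase b := fun h => hi (mem_of_mem_erase h)
  refine sgv_eq_of_mem_iff_of_eq_two_iff (iff_of_false hi' hi) ?_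
  rw [sgv_eq_two_iff_of_notMem n hi' hi1, sgv_eq_two_iff_of_notMem n hi hi1]
  refine forall_congr' fun m => forall_congr' fun hmi => ?_
  rw [hwalk, hwalk, if_neg (by omega), if_neg (by omega), sub_zero, sub_zero]

lemma sgv_eq_two_of_sgv_erase_eq_two (hb : b ∈ x) (hb1 : 1 ≤ b) (hi : i ∈ x) (hi1 : 1 ≤ i)
    (hib : i < b) (h : sgv n (x.erase b) i = 2) : sgv n x i = 2 := by
  have hwalk := walk_erase hb hb1
  rw [sgv_eq_two_iff_of_mem n (mem_erase.2 ⟨hib.ne, hi⟩) hi1] at h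
  rw [sgv_eq_two_iff_of_mem n hi hi1]
  intro j hij hjn
  have := h j hij hjn
  rw [hwalk, hwalk, if_neg (by omega)] at this
  split_ifs at this <;> omega

-- As `i`, `c`, `b` are unmatched, the walk from `b` on stays at least three above its height
-- at `i - 1`, so lowering it by two there keeps `i` unmatched.
lemma sgv_erase_eq_two_of_lt_of_lt {c : ℕ} (hb : b ∈ x) (hsb : sgv n x b = 2) (hi : i ∈ x)
    (hsi : sgv n x i = 2) (hc : c ∈ x) (hsc : sgv n x c = 2) (hi1 : 1 ≤ i) (hic : i < c)
    (hcb : c < b) : sgv n (x.erase b) i = 2 := by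
  have hwalk := walk_erase hb (by omega)
  have hstar_i := (sgv_eq_two_iff_of_mem n hi hi1).1 hsi
  have hstar_c := (sgv_eq_two_iff_of_mem n hc (by omega)).1 hsc
  have hstar_b := (sgv_eq_two_iff_of_mem n hb (by omega)).1 hsb
  rw [sgv_eq_two_iff_of_mem n (mem_erase.2 ⟨(hic.trans hcb).ne, hi⟩) hi1]
  intro j hij hjn
  rw [hwalk, hwalk, if_neg (by omega)]
  split_ifs with hbj
  · have := hstar_i (c - 1) (by omega) (by omega)
    have := hstar_c (b - 1) (by omega) (by omega)
    have := hstar_b j hbj hjn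
    omega
  · have := hstar_i j hij hjn
    omega

lemma sigOnes_subset_sigOnes_erase (hb : b ∈ x) (hb1 : 1 ≤ b) (hsb : sgv n x b = 2) :
    sigOnes n x ⊆ sigOnes n (x.erase b) := by
  intro i hi
  simp only [sigOnes, mem_filter, mem_Icc] at hi ⊢
  obtain ⟨hiI, hi1⟩ := hi
  have hix := mem_of_sgv_eq_one hi1
  refine ⟨hiI, ?_⟩
  rcases lt_or_gt_of_ne (show i ≠ b by rintro rfl; omega) with hib | hbi
  · rcases sgv_of_mem (n := n) (mem_erase.2 ⟨hib.ne, hix⟩) with h | h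
    · exact h
    · have := sgv_eq_two_of_sgv_erase_eq_two hb hb1 hix hiI.1 hib h
      omega
  · rwa [sgv_erase_of_lt_of_le hb hb1 hsb hbi hiI.2]

lemma sigStars_erase_subset (hb : b ∈ x) (hb1 : 1 ≤ b) (hsb : sgv n x b = 2) :
    sigStars n (x.erase b) ⊆ sigStars n x := by
  intro i hi
  simp only [sigStars, mem_filter, mem_Icc] at hi ⊢
  obtain ⟨hiI, hi2⟩ := hi
  refine ⟨hiI, ?_⟩
  rcases lt_trichotomy i b with hib | rfl | hbi
  · by_cases hix : i ∈ x
    · exact sgv_eq_two_of_sgv_erase_eq_two hb hb1 hix hiI.1 hib hi2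
    · rwa [← sgv_erase_of_notMem_of_lt hb hb1 hix hiI.1 hib]
  · exact hsb
  · rwa [← sgv_erase_of_lt_of_le hb hb1 hsb hbi hiI.2]

-- Only the last unmatched `(` before `b` can get matched to the new `)` at `b`.
lemma card_sigOnes_erase_le (hb : b ∈ x) (hb1 : 1 ≤ b) (hsb : sgv n x b = 2) :
    #(sigOnes n (x.erase b)) ≤ #(sigOnes n x) + 1 := by
  have hnew : ∀ s ∈ sigOnes n (x.erase b) \ sigOnes n x,
      1 ≤ s ∧ s ∈ x ∧ sgv n x s = 2 ∧ s < b ∧ sgv n (x.erase b) s = 1 := by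
    intro s hs
    simp only [sigOnes, mem_sdiff, mem_filter, mem_Icc, not_and] at hs
    obtain ⟨⟨hsI, hs1⟩, hsx1⟩ := hs
    have hsx := mem_of_mem_erase (mem_of_sgv_eq_one hs1)
    have hs2 : sgv n x s = 2 := (sgv_of_mem hsx).resolve_left (hsx1 hsI)
    refine ⟨hsI.1, hsx, hs2, lt_of_not_ge fun hbs => ?_, hs1⟩
    rcases hbs.eq_or_lt with rfl | hbs
    · exact notMem_erase _ _ (mem_of_sgv_eq_one hs1)
    · rw [sgv_erase_of_lt_of_le hb hb1 hsb hbs hsI.2] at hs1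
      omega
  have hle : #(sigOnes n (x.erase b) \ sigOnes n x) ≤ 1 := by
    refine card_le_one.2 fun s hs t ht => ?_
    obtain ⟨hs1, hsx, hs2, hsb', hs1'⟩ := hnew s hs
    obtain ⟨ht1, htx, ht2, htb, ht1'⟩ := hnew t ht
    by_contra hst
    rcases lt_or_gt_of_ne hst with hst | hts
    · have := sgv_erase_eq_two_of_lt_of_lt hb hsb hsx hs2 htx ht2 hs1 hst htb
      omega
    · have := sgv_erase_eq_two_of_lt_of_lt hb hsb htx ht2 hsx hs2 ht1 hts hsb'
      omega
  have := card_le_card_sdiff_add_card (s := sigOnes n (x.erase b)) (t := sigOnes n x)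
  omega

end Erase

section ChainStep

variable {n b : ℕ} {x w w' : Finset ℕ}

lemma subset_of_sigEquiv_erase (hx : x ⊆ Icc 1 n) (hb : b ∈ x) (hsb : sgv n x b = 2)
    (hw : w ⊆ Icc 1 n) (hwx : SigEquiv n w x) (hw' : w' ⊆ Icc 1 n)
    (hw'x : SigEquiv n w' (x.erase b)) (hcard : #w < #w') (hbw : b ∉ w) : w ⊆ w' := by
  have hbI := mem_Icc.1 (hx hb)
  intro i hi
  have hiI := hw hi
  rcases sgv_of_mem (n := n) hi with h1 | h2
  · have hi1 : i ∈ sigOnes n (x.erase b) :=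
      sigOnes_subset_sigOnes_erase hb hbI.1 hsb (mem_filter.2 ⟨hiI, by rwa [← hwx i hiI]⟩)
    exact mem_of_sgv_eq_one (n := n) (by rw [hw'x i hiI]; exact (mem_filter.1 hi1).2)
  · have hbi : b < i :=
      lt_of_sgv_eq_two hi h2 hbw (by rw [hwx b (hx hb)]; exact hsb) (mem_Icc.1 hiI).1 hbI.1 hbI.2
    have hsi : sgv n w' i = 2 := by
      rw [hw'x i hiI, sgv_erase_of_lt_of_le hb hbI.1 hsb hbi (mem_Icc.1 hiI).2, ← hwx i hiI, h2]
    have hmem := (mem_iff_card_lt hw (mem_filter.2 ⟨hiI, h2⟩)).1 hi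
    rw [hwx.sigStars_eq, hwx.sigOnes_eq] at hmem
    rw [mem_iff_card_lt hw' (mem_filter.2 ⟨hiI, hsi⟩), hw'x.sigStars_eq, hw'x.sigOnes_eq]
    have := card_le_card (filter_subset_filter (i < ·) (sigStars_erase_subset hb hbI.1 hsb))
    have := card_sigOnes_erase_le hb hbI.1 hsb
    omega

lemma subset_and_subset_erase_iff (hx : x ⊆ Icc 1 n) (hb : b ∈ x) (hw : w ⊆ Icc 1 n)
    (hwx : SigEquiv n w x) (hw' : w' ⊆ Icc 1 n) (hw'x : SigEquiv n w' (x.erase b))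
    (hcard : #w < #w') (hcard' : #w' ≤ #(x.erase b)) :
    (w ⊆ w' ∧ w' ⊆ x.erase b) ↔ (sgv n x b = 2 ∧ b ∉ w) := by
  constructor
  · rintro ⟨hww', hw'x'⟩
    have hbw : b ∉ w := fun h => notMem_erase b x (hw'x' (hww' h))
    refine ⟨(sgv_of_mem hb).resolve_left fun h1 => hbw ?_, hbw⟩
    exact mem_of_sgv_eq_one (n := n) (by rw [hwx b (hx hb)]; exact h1)
  · rintro ⟨hsb, hbw⟩
    exact ⟨subset_of_sigEquiv_erase hx hb hsb hw hwx hw' hw'x hcard hbw,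
      subset_of_sigEquiv hw' ((erase_subset b x).trans hx) hw'x hcard'⟩

lemma notMem_iff_card_filter_le_add (hx : x ⊆ Icc 1 n) (hw : w ⊆ Icc 1 n)
    (hwx : SigEquiv n w x) (hb : b ∈ x) (hsb : sgv n x b = 2) :
    b ∉ w ↔ #((x.filter (fun i => sgv n x i = 2)).filter (fun i => i ≤ b)) + #w ≤ #x := by
  have hbI := hx hb
  have hbs : b ∈ sigStars n w := mem_filter.2 ⟨hbI, by rw [hwx b hbI]; exact hsb⟩
  rw [mem_iff_card_lt hw hbs, hwx.sigStars_eq, hwx.sigOnes_eq, not_lt]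
  have hupper : (sigStars n x).filter (b < ·) =
      (x.filter (fun i => sgv n x i = 2)).filter (fun i => ¬ i ≤ b) := by
    ext t
    simp only [sigStars, mem_filter, not_le]
    constructor
    · rintro ⟨⟨htI, ht2⟩, hbt⟩
      refine ⟨⟨by_contra fun htx => ?_, ht2⟩, hbt⟩
      have := lt_of_sgv_eq_two hb hsb htx ht2 (mem_Icc.1 hbI).1 (mem_Icc.1 htI).1
        (mem_Icc.1 htI).2
      omega
    · rintro ⟨⟨htx, ht2⟩, hbt⟩
      exact ⟨⟨hx htx, ht2⟩, hbt⟩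
  rw [hupper]
  have := card_filter_add_card_filter_not (s := x.filter (fun i => sgv n x i = 2)) (· ≤ b)
  have := card_eq_card_sigOnes_add hx
  omega

lemma card_filter_notMem_add_card (hx : x ⊆ Icc 1 n) (hw : w ⊆ Icc 1 n) (hwx : SigEquiv n w x)
    (hwsub : w ⊆ x) : #((x.filter (fun i => sgv n x i = 2)).filter (· ∉ w)) + #w = #x := by
  have hin : (x.filter (fun i => sgv n x i = 2)).filter (· ∈ w) =
      w.filter (fun i => sgv n w i = 2) := by
    ext t
    simp only [mem_filter]
    constructor
    · rintro ⟨⟨_, ht2⟩, htw⟩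
      exact ⟨htw, by rw [hwx t (hw htw)]; exact ht2⟩
    · rintro ⟨htw, ht2⟩
      exact ⟨⟨hwsub htw, by rw [← hwx t (hw htw)]; exact ht2⟩, htw⟩
  have := card_filter_add_card_filter_not (s := x.filter (fun i => sgv n x i = 2)) (· ∈ w)
  rw [hin] at this
  have := card_eq_card_sigOnes_add hx
  have := card_eq_card_sigOnes_add hw
  rw [hwx.sigOnes_eq] at this
  omega

end ChainStep

open Classical in
/-- let `k ≥ n/2 + 1`, `x ∈ [n]^(k)` and let `p` map each set `z` with
`|z| ≥ n/2` to the unique member of its signature class with `|z| + |p z| = n`.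
For `b ∈ x` and `y = x \ {b}`: `p(x) ⊆ p(y) ⊆ y ⊆ x` iff `b` is one of the
`2k - n` smallest elements of `x ∩ *(x)`. In particular, `x` covers exactly
`2k - n` elements of `[n]^(k-1)` in the order `y < x ↔ p(x) ⊆ p(y) ⊆ y ⊆ x`. -/
theorem stmt_13 (n k : ℕ) (x : Finset ℕ) (hx : x ⊆ Finset.Icc 1 n)
    (hk : x.card = k) (hk2 : n + 2 ≤ 2 * k)
    (p : Finset ℕ → Finset ℕ)
    (hp : ∀ z ⊆ Finset.Icc 1 n, n ≤ 2 * z.card →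
      p z ⊆ Finset.Icc 1 n ∧ z.card + (p z).card = n ∧
        ∀ i ∈ Finset.Icc 1 n, sgv n (p z) i = sgv n z i) :
    (∀ b ∈ x,
      ((p x ⊆ p (x.erase b) ∧ p (x.erase b) ⊆ x.erase b) ↔
        (sgv n x b = 2 ∧
          ((x.filter (fun i => sgv n x i = 2)).filter (fun i => i ≤ b)).card ≤
            2 * k - n))) ∧
    (x.filter (fun b => p x ⊆ p (x.erase b) ∧ p (x.erase b) ⊆ x.erase b)).card + n =
      2 * k := by
  obtain ⟨hpx, hpx_card, hpx_sig⟩ := hp x hx (by omega)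
  have hstep : ∀ b ∈ x, (p x ⊆ p (x.erase b) ∧ p (x.erase b) ⊆ x.erase b) ↔
      (sgv n x b = 2 ∧ b ∉ p x) := by
    intro b hb
    have hy_card : #(x.erase b) = k - 1 := by rw [card_erase_of_mem hb, hk]
    obtain ⟨hpy, hpy_card, hpy_sig⟩ := hp _ ((erase_subset b x).trans hx) (by omega)
    exact subset_and_subset_erase_iff hx hb hpx hpx_sig hpy hpy_sig (by omega) (by omega)
  refine ⟨fun b hb => ?_, ?_⟩
  · rw [hstep b hb]
    refine and_congr_right fun hsb => ?_
    rw [notMem_iff_card_filter_le_add hx hpx hpx_sig hb hsb]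
    omega
  · rw [filter_congr hstep, ← filter_filter]
    have := card_filter_notMem_add_card hx hpx hpx_sig
      (subset_of_sigEquiv hpx hx hpx_sig (by omega))
    omega
end

section
/- For x ⊆ [n] viewed in ℤ_n with circular pair function pr'_x: if pr'_x(i) = j exists then pr'_x(j) exists, pr'_x(j) = i, and exactly one of i, j lies in x (csg(x)_i ≠ csg(x)_j). -/
/-- The circular interval `[i,j]_n ⊆ {1,...,n}`. -/
def cIcc (n i j : ℕ) : Finset ℕ :=
  if i ≤ j then Finset.Icc i j else Finset.Icc i n ∪ Finset.Icc 1 j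

/-- `c'_x(i,j) = |[i,j]_n ∩ x| - |[i,j]_n \ x|`. -/
def ccfun (n : ℕ) (x : Finset ℕ) (i j : ℕ) : ℤ :=
  ((cIcc n i j ∩ x).card : ℤ) - ((cIcc n i j \ x).card : ℤ)

/-- `j = pr'_x(i)` for `i ∈ x`: `c'_x(i,j) = 0` and `|[i,j]_n|` is minimal. -/
def IsCPairIn (n : ℕ) (x : Finset ℕ) (i j : ℕ) : Prop :=
  j ∈ Finset.Icc 1 n ∧ ccfun n x i j = 0 ∧
    ∀ j' ∈ Finset.Icc 1 n, ccfun n x i j' = 0 → (cIcc n i j).card ≤ (cIcc n i j').card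

/-- `j = pr'_x(i)` for `i ∉ x`: `c'_x(j,i) = 0` and `|[j,i]_n|` is minimal. -/
def IsCPairOut (n : ℕ) (x : Finset ℕ) (i j : ℕ) : Prop :=
  j ∈ Finset.Icc 1 n ∧ ccfun n x j i = 0 ∧
    ∀ j' ∈ Finset.Icc 1 n, ccfun n x j' i = 0 → (cIcc n j i).card ≤ (cIcc n j' i).card

/-!
Walk around the circle from `i`, scoring `+1` for points of `x` and `-1` for the others. If `j` is
the nearest point with `c'_x(i,j) = 0`, the running score is nonzero on the proper prefixes of
`[i,j]_n` and vanishes on the whole arc. A `±1` walk keeps the sign of its first step until it first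
vanishes, so `j` scores opposite to `i`. A shorter arc `[j',j]_n` has `j'` strictly inside
`[i,j]_n`, and its score is minus the score of a proper prefix, hence nonzero: `i` is the nearest
point before `j` with `c'_x(i,j) = 0`. The reflection `k ↦ n + 1 - k` reverses arcs and exchanges
the two directions of search, which handles the case `i ∉ x`.
-/

open Finset

section Walk

variable (w : ℕ → ℤ)

theorem mul_sum_range_pos_of_ne_zero (hw : ∀ t, w t = 1 ∨ w t = -1) {D : ℕ}
    (hne : ∀ d < D, ∑ t ∈ range (d + 1), w t ≠ 0) :
    ∀ d < D, 0 < w 0 * ∑ t ∈ range (d + 1), w t := by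
  intro d hd
  induction d with
  | zero => rcases hw 0 with h | h <;> simp [h]
  | succ d ih =>
    have hpos := ih (by omega)
    have hd0 := hne (d + 1) hd
    rw [sum_range_succ] at hd0 ⊢
    rcases hw 0 with h0 | h0 <;> rcases hw (d + 1) with h | h <;> simp only [h0, h] at * <;> omega

theorem eq_neg_of_sum_range_eq_zero (hw : ∀ t, w t = 1 ∨ w t = -1) {D : ℕ}
    (hne : ∀ d < D, ∑ t ∈ range (d + 1), w t ≠ 0) (hzero : ∑ t ∈ range (D + 1), w t = 0) :
    w D = -w 0 := by
  cases D with
  | zero => rcases hw 0 with h | h <;> simp [h] at hzero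
  | succ d =>
    have hpos := mul_sum_range_pos_of_ne_zero w hw hne d (Nat.lt_succ_self d)
    rw [sum_range_succ] at hzero
    rcases hw 0 with h0 | h0 <;> rcases hw (d + 1) with h | h <;> simp only [h0, h] at * <;> omega

end Walk

section Arc

variable {n : ℕ}

def cdist (n i j : ℕ) : ℕ := if i ≤ j then j - i else j + n - i

def cadd (n i t : ℕ) : ℕ := if i + t ≤ n then i + t else i + t - n

def wt (x : Finset ℕ) (k : ℕ) : ℤ := if k ∈ x then 1 else -1

theorem wt_eq_one_or_neg_one (x : Finset ℕ) (k : ℕ) : wt x k = 1 ∨ wt x k = -1 := by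
  unfold wt; split_ifs <;> simp

theorem cdist_lt {i j : ℕ} (hi : i ∈ Icc 1 n) (hj : j ∈ Icc 1 n) : cdist n i j < n := by
  rw [mem_Icc] at hi hj; unfold cdist; split_ifs <;> omega

theorem cadd_mem_Icc {i t : ℕ} (hi : i ∈ Icc 1 n) (ht : t < n) : cadd n i t ∈ Icc 1 n := by
  rw [mem_Icc] at hi ⊢; unfold cadd; split_ifs <;> omega

theorem cadd_zero {i : ℕ} (hi : i ∈ Icc 1 n) : cadd n i 0 = i := by
  rw [mem_Icc] at hi; unfold cadd; split_ifs <;> omega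

theorem cdist_cadd {i t : ℕ} (hi : i ∈ Icc 1 n) (ht : t < n) : cdist n i (cadd n i t) = t := by
  rw [mem_Icc] at hi; unfold cdist cadd; split_ifs <;> omega

theorem cadd_cdist {i j : ℕ} (hi : i ∈ Icc 1 n) (hj : j ∈ Icc 1 n) : cadd n i (cdist n i j) = j := by
  rw [mem_Icc] at hi hj; unfold cdist cadd; split_ifs <;> omega

theorem mem_cIcc {a b k : ℕ} (ha : a ∈ Icc 1 n) (hb : b ∈ Icc 1 n) :
    k ∈ cIcc n a b ↔ k ∈ Icc 1 n ∧ cdist n a k ≤ cdist n a b := by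
  rw [mem_Icc] at ha hb
  unfold cIcc cdist
  split_ifs <;> simp only [mem_Icc, mem_union] <;> omega

theorem card_cIcc {a b : ℕ} (ha : a ∈ Icc 1 n) (hb : b ∈ Icc 1 n) :
    #(cIcc n a b) = cdist n a b + 1 := by
  rw [mem_Icc] at ha hb
  unfold cIcc cdist
  split_ifs
  · rw [Nat.card_Icc]; omega
  · rw [card_union_of_disjoint, Nat.card_Icc, Nat.card_Icc]
    · omega
    · rw [disjoint_left]; intro k hk hk'; rw [mem_Icc] at hk hk'; omega

theorem cIcc_cadd {i a b : ℕ} (hi : i ∈ Icc 1 n) (hab : a ≤ b) (hb : b < n) :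
    cIcc n (cadd n i a) (cadd n i b) = (Ico a (b + 1)).image (cadd n i) := by
  ext k
  rw [mem_cIcc (cadd_mem_Icc hi (by omega)) (cadd_mem_Icc hi hb), mem_image]
  constructor
  · rintro ⟨hk, hle⟩
    refine ⟨cdist n i k, ?_, cadd_cdist hi hk⟩
    rw [mem_Icc] at hi hk; rw [mem_Ico]
    unfold cdist cadd at *; split_ifs at * <;> omega
  · rintro ⟨t, ht, rfl⟩
    rw [mem_Ico] at ht
    refine ⟨cadd_mem_Icc hi (by omega), ?_⟩
    rw [mem_Icc] at hi
    unfold cdist cadd; split_ifs <;> omega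

theorem ccfun_eq_sum_wt (x : Finset ℕ) (a b : ℕ) : ccfun n x a b = ∑ k ∈ cIcc n a b, wt x k := by
  simp only [ccfun, wt, sum_ite, sum_const, filter_mem_eq_inter, filter_notMem_eq_sdiff]
  simp [sub_eq_add_neg]

theorem ccfun_cadd (x : Finset ℕ) {i a b : ℕ} (hi : i ∈ Icc 1 n) (hab : a ≤ b) (hb : b < n) :
    ccfun n x (cadd n i a) (cadd n i b) = ∑ t ∈ Ico a (b + 1), wt x (cadd n i t) := by
  rw [ccfun_eq_sum_wt, cIcc_cadd hi hab hb, sum_image]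
  intro t ht u hu htu
  rw [coe_Ico, Set.mem_Ico] at ht hu
  rw [← cdist_cadd hi (show t < n by omega), htu, cdist_cadd hi (by omega)]

theorem cdist_pos_le_of_cdist_lt {i j j' : ℕ} (hi : i ∈ Icc 1 n) (hj : j ∈ Icc 1 n)
    (hj' : j' ∈ Icc 1 n) (hlt : cdist n j' j < cdist n i j) :
    0 < cdist n i j' ∧ cdist n i j' ≤ cdist n i j := by
  rw [mem_Icc] at hi hj hj'
  unfold cdist at *; split_ifs at * <;> omega

end Arc

theorem IsCPairIn.mem_iff_notMem_and_isCPairOut {n : ℕ} {x : Finset ℕ} {i j : ℕ}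
    (hi : i ∈ Icc 1 n) (h : IsCPairIn n x i j) : (i ∈ x ↔ j ∉ x) ∧ IsCPairOut n x j i := by
  obtain ⟨hj, hzero, hmin⟩ := h
  set w : ℕ → ℤ := fun t => wt x (cadd n i t)
  set D := cdist n i j
  have hD : D < n := cdist_lt hi hj
  have hjD : cadd n i D = j := cadd_cdist hi hj
  have hwalk : ∀ d < n, ccfun n x i (cadd n i d) = ∑ t ∈ range (d + 1), w t := by
    intro d hd
    have := ccfun_cadd x hi (Nat.zero_le d) hd
    rwa [cadd_zero hi, ← range_eq_Ico] at this
  have hne : ∀ d < D, ∑ t ∈ range (d + 1), w t ≠ 0 := by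
    intro d hd hd0
    have hle := hmin (cadd n i d) (cadd_mem_Icc hi (by omega)) (by rw [hwalk d (by omega), hd0])
    rw [card_cIcc hi hj, card_cIcc hi (cadd_mem_Icc hi (by omega)), cdist_cadd hi (by omega)] at hle
    omega
  have hwalkD : ∑ t ∈ range (D + 1), w t = 0 := by rw [← hwalk D hD, hjD, hzero]
  refine ⟨?_, hi, hzero, fun j' hj' hzero' => ?_⟩
  · have hlast := eq_neg_of_sum_range_eq_zero w (fun t => wt_eq_one_or_neg_one x _) hne hwalkD
    simp only [w, hjD, cadd_zero hi, wt] at hlast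
    split_ifs at hlast <;> simp_all
  · rw [card_cIcc hi hj, card_cIcc hj' hj, Nat.add_le_add_iff_right]
    by_contra! hlt
    obtain ⟨ha0, haD⟩ := cdist_pos_le_of_cdist_lt hi hj hj' hlt
    set a := cdist n i j'
    have hsplit := sum_range_add_sum_Ico w (show a ≤ D + 1 by omega)
    rw [hwalkD] at hsplit
    rw [← cadd_cdist hi hj', ← hjD, ccfun_cadd x hi haD hD] at hzero'
    exact hne (a - 1) (by omega) (by rw [Nat.sub_add_cancel ha0]; linarith)

section Reflect

variable {n : ℕ}

def creflect (n : ℕ) (x : Finset ℕ) : Finset ℕ := (Icc 1 n).filter (n + 1 - · ∈ x)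

theorem reflect_mem_Icc_iff {k : ℕ} : n + 1 - k ∈ Icc 1 n ↔ k ∈ Icc 1 n := by
  simp only [mem_Icc]; omega

theorem reflect_reflect {k : ℕ} (hk : k ∈ Icc 1 n) : n + 1 - (n + 1 - k) = k := by
  rw [mem_Icc] at hk; omega

theorem reflect_mem_creflect {x : Finset ℕ} {k : ℕ} (hk : k ∈ Icc 1 n) :
    n + 1 - k ∈ creflect n x ↔ k ∈ x := by
  rw [creflect, mem_filter, reflect_reflect hk, and_iff_right (reflect_mem_Icc_iff.2 hk)]

theorem cIcc_reflect {a b : ℕ} (ha : a ∈ Icc 1 n) (hb : b ∈ Icc 1 n) :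
    cIcc n (n + 1 - b) (n + 1 - a) = (cIcc n a b).image (n + 1 - ·) := by
  ext k
  rw [mem_cIcc (reflect_mem_Icc_iff.2 hb) (reflect_mem_Icc_iff.2 ha), mem_image]
  constructor
  · rintro ⟨hk, hle⟩
    refine ⟨n + 1 - k, ?_, reflect_reflect hk⟩
    rw [mem_cIcc ha hb, and_iff_right (reflect_mem_Icc_iff.2 hk)]
    rw [mem_Icc] at ha hb hk; unfold cdist at *; split_ifs at * <;> omega
  · rintro ⟨l, hl, rfl⟩
    rw [mem_cIcc ha hb] at hl
    refine ⟨reflect_mem_Icc_iff.2 hl.1, ?_⟩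
    obtain ⟨hl, hle⟩ := hl
    rw [mem_Icc] at ha hb hl; unfold cdist at *; split_ifs at * <;> omega

theorem reflect_injOn_cIcc {a b : ℕ} (ha : a ∈ Icc 1 n) (hb : b ∈ Icc 1 n) :
    Set.InjOn (n + 1 - ·) (cIcc n a b) := by
  intro k hk l hl hkl
  rw [mem_coe, mem_cIcc ha hb, mem_Icc] at hk hl
  simp only at hkl
  omega

theorem card_cIcc_reflect {a b : ℕ} (ha : a ∈ Icc 1 n) (hb : b ∈ Icc 1 n) :
    #(cIcc n (n + 1 - b) (n + 1 - a)) = #(cIcc n a b) := by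
  rw [cIcc_reflect ha hb, card_image_of_injOn (reflect_injOn_cIcc ha hb)]

theorem ccfun_creflect (x : Finset ℕ) {a b : ℕ} (ha : a ∈ Icc 1 n) (hb : b ∈ Icc 1 n) :
    ccfun n (creflect n x) (n + 1 - b) (n + 1 - a) = ccfun n x a b := by
  rw [ccfun_eq_sum_wt, ccfun_eq_sum_wt, cIcc_reflect ha hb, sum_image (reflect_injOn_cIcc ha hb)]
  refine sum_congr rfl fun k hk => ?_
  simp only [wt, reflect_mem_creflect ((mem_cIcc ha hb).1 hk).1]

theorem forall_mem_Icc_reflect {P : ℕ → Prop} :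
    (∀ k ∈ Icc 1 n, P (n + 1 - k)) ↔ ∀ k ∈ Icc 1 n, P k :=
  ⟨fun h _ hk => reflect_reflect hk ▸ h _ (reflect_mem_Icc_iff.2 hk),
    fun h _ hk => h _ (reflect_mem_Icc_iff.2 hk)⟩

theorem isCPairOut_iff_isCPairIn_creflect {x : Finset ℕ} {i j : ℕ} (hi : i ∈ Icc 1 n) :
    IsCPairOut n x i j ↔ IsCPairIn n (creflect n x) (n + 1 - i) (n + 1 - j) := by
  unfold IsCPairOut IsCPairIn
  conv_rhs => rw [reflect_mem_Icc_iff, ← forall_mem_Icc_reflect]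
  refine and_congr_right fun hj => ?_
  rw [ccfun_creflect x hj hi, card_cIcc_reflect hj hi]
  exact and_congr_right' <| forall₂_congr fun j' hj' => by
    rw [ccfun_creflect x hj' hi, card_cIcc_reflect hj' hi]

theorem isCPairIn_iff_isCPairOut_creflect {x : Finset ℕ} {i j : ℕ} (hi : i ∈ Icc 1 n) :
    IsCPairIn n x i j ↔ IsCPairOut n (creflect n x) (n + 1 - i) (n + 1 - j) := by
  unfold IsCPairOut IsCPairIn
  conv_rhs => rw [reflect_mem_Icc_iff, ← forall_mem_Icc_reflect]
  refine and_congr_right fun hj => ?_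
  rw [ccfun_creflect x hi hj, card_cIcc_reflect hi hj]
  exact and_congr_right' <| forall₂_congr fun j' hj' => by
    rw [ccfun_creflect x hi hj', card_cIcc_reflect hi hj']

end Reflect

theorem IsCPairOut.mem_iff_notMem_and_isCPairIn {n : ℕ} {x : Finset ℕ} {i j : ℕ}
    (hi : i ∈ Icc 1 n) (h : IsCPairOut n x i j) : (i ∈ x ↔ j ∉ x) ∧ IsCPairIn n x j i := by
  have hj : j ∈ Icc 1 n := h.1
  obtain ⟨hmem, hpair⟩ := ((isCPairOut_iff_isCPairIn_creflect hi).1 h).mem_iff_notMem_and_isCPairOut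
    (reflect_mem_Icc_iff.2 hi)
  rw [reflect_mem_creflect hi, reflect_mem_creflect hj] at hmem
  exact ⟨hmem, (isCPairIn_iff_isCPairOut_creflect hj).2 hpair⟩

theorem stmt_14_general (n : ℕ) (x : Finset ℕ) (i j : ℕ) (hi : i ∈ Finset.Icc 1 n) :
    (i ∈ x → IsCPairIn n x i j → j ∉ x ∧ IsCPairOut n x j i) ∧
    (i ∉ x → IsCPairOut n x i j → j ∈ x ∧ IsCPairIn n x j i) := by
  refine ⟨fun hix h => ?_, fun hix h => ?_⟩
  · obtain ⟨hmem, hpair⟩ := h.mem_iff_notMem_and_isCPairOut hi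
    exact ⟨hmem.1 hix, hpair⟩
  · obtain ⟨hmem, hpair⟩ := h.mem_iff_notMem_and_isCPairIn hi
    exact ⟨not_not.1 (mt hmem.2 hix), hpair⟩

/-- if the circular pair `pr'_x(i) = j` exists, then `pr'_x(j)` exists
and equals `i`, and exactly one of `i`, `j` lies in `x` (`csg(x)_i ≠ csg(x)_j`). -/
theorem stmt_14 (n : ℕ) (x : Finset ℕ) (hx : x ⊆ Finset.Icc 1 n)
    (i j : ℕ) (hi : i ∈ Finset.Icc 1 n) :
    (i ∈ x → IsCPairIn n x i j → j ∉ x ∧ IsCPairOut n x j i) ∧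
    (i ∉ x → IsCPairOut n x i j → j ∈ x ∧ IsCPairIn n x j i) :=
  stmt_14_general n x i j hi
end
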